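/- arXiv:2004.11704 — 7 statements merged into one kernel-verified Lean document; each statement's English description precedes it below -/
import Mathlib

section
/- Let c be C¹ on (0,T₀] with μ₁ ≤ c(t) ≤ μ₂ (μ₁ > 0), let λ > 0, u a solution of u'' + λ²c(t)²u = 0, and define the Tarama energy E_tar(t) = |u'(t)|²/c(t) + λ²c(t)|u(t)|² + c'(t)²|u(t)|²/(4c(t)³) + c'(t)u(t)u'(t)/c(t)². Suppose ε₁ ∈ (0,1) satisfies ε₁c'(t)² ≤ 4(1−ε₁)²c(t)⁴λ² on an interval I ⊆ (0,T₀]. Then E_tar(t) ≥ (ε₁/c(t))·(|u'(t)|² + λ²c(t)²|u(t)|²) for all t ∈ I. -/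
open Set

theorem stmt4 (T₀ μ₁ μ₂ lam ε₁ : ℝ) (hT : 0 < T₀) (hμ₁ : 0 < μ₁) (hμ : μ₁ < μ₂)
    (hlam : 0 < lam) (hε₁ : 0 < ε₁) (hε₁' : ε₁ < 1)
    (c u : ℝ → ℝ) (I : Set ℝ) (hI : I ⊆ Set.Ioc 0 T₀)
    (hc : ∀ t ∈ Set.Ioc 0 T₀, DifferentiableAt ℝ c t)
    (hcb : ∀ t ∈ Set.Ioc 0 T₀, μ₁ ≤ c t ∧ c t ≤ μ₂)
    (hu : ∀ t ∈ Set.Ioc 0 T₀, DifferentiableAt ℝ u t)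
    (hu' : ∀ t ∈ Set.Ioc 0 T₀, DifferentiableAt ℝ (deriv u) t)
    (hode : ∀ t ∈ Set.Ioc 0 T₀, deriv (deriv u) t + lam ^ 2 * (c t) ^ 2 * u t = 0)
    (hsmall : ∀ t ∈ I, ε₁ * (deriv c t) ^ 2 ≤ 4 * (1 - ε₁) ^ 2 * (c t) ^ 4 * lam ^ 2) :
    ∀ t ∈ I,
      (deriv u t) ^ 2 / c t + lam ^ 2 * c t * (u t) ^ 2 +
          (deriv c t) ^ 2 * (u t) ^ 2 / (4 * (c t) ^ 3) +
          deriv c t * u t * deriv u t / (c t) ^ 2 ≥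
        ε₁ / c t * ((deriv u t) ^ 2 + lam ^ 2 * (c t) ^ 2 * (u t) ^ 2) := by
  intro t ht
  have htI := hI ht
  have hcpos : 0 < c t := lt_of_lt_of_le hμ₁ (hcb t htI).1
  have hcne : c t ≠ 0 := ne_of_gt hcpos
  have hep : (0:ℝ) < 1 - ε₁ := by linarith
  have hsm := hsmall t ht
  rw [ge_iff_le, ← sub_nonneg]
  have key : (deriv u t) ^ 2 / c t + lam ^ 2 * c t * (u t) ^ 2 +
          (deriv c t) ^ 2 * (u t) ^ 2 / (4 * (c t) ^ 3) +
          deriv c t * u t * deriv u t / (c t) ^ 2 -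
        ε₁ / c t * ((deriv u t) ^ 2 + lam ^ 2 * (c t) ^ 2 * (u t) ^ 2) =
      ((2 * (1 - ε₁) * c t * deriv u t + deriv c t * u t) ^ 2 +
        (4 * (1 - ε₁) ^ 2 * (c t) ^ 4 * lam ^ 2 - ε₁ * (deriv c t) ^ 2) * (u t) ^ 2) /
        (4 * (1 - ε₁) * (c t) ^ 3) := by
    field_simp
    ring
  rw [key]
  have hnum : 0 ≤ (2 * (1 - ε₁) * c t * deriv u t + deriv c t * u t) ^ 2 +
      (4 * (1 - ε₁) ^ 2 * (c t) ^ 4 * lam ^ 2 - ε₁ * (deriv c t) ^ 2) * (u t) ^ 2 := by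
    have := mul_nonneg (sub_nonneg.2 hsm) (sq_nonneg (u t))
    nlinarith [sq_nonneg (2 * (1 - ε₁) * c t * deriv u t + deriv c t * u t)]
  positivity
end

section
/- With the Tarama energy E_tar(t) = |u'(t)|²/c(t) + λ²c(t)|u(t)|² + c'(t)²|u(t)|²/(4c(t)³) + c'(t)u(t)u'(t)/c(t)² associated to a C² propagation speed c and a solution u of u'' + λ²c(t)²u = 0, one has the identity E_tar'(t) = ( (|u(t)|²/2)·c'(t)/c(t)³ + u(t)u'(t)/c(t)² )·( c''(t) − (3/2)c'(t)²/c(t) ) for all t in the interval of definition. -/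
/-!
Differentiate the energy term by term and eliminate `u''` with the equation
`u'' = -λ²c²u`: all terms carrying `λ²` cancel, and the `c'`-correction terms are
chosen so that what remains factors through `c'' - (3/2) c'²/c`.
-/

open Set

-- `γ` and `v` stand for `c'` and `u'`.
noncomputable def taramaEnergy (lam : ℝ) (c γ u v : ℝ → ℝ) (s : ℝ) : ℝ :=
  v s ^ 2 / c s + lam ^ 2 * c s * u s ^ 2 + γ s ^ 2 * u s ^ 2 / (4 * c s ^ 3) +
    γ s * u s * v s / c s ^ 2

theorem hasDerivAt_taramaEnergy {lam t γ' : ℝ} {c γ u v : ℝ → ℝ} (hct : c t ≠ 0)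
    (hc : HasDerivAt c (γ t) t) (hγ : HasDerivAt γ γ' t) (hu : HasDerivAt u (v t) t)
    (hv : HasDerivAt v (-(lam ^ 2 * c t ^ 2 * u t)) t) :
    HasDerivAt (taramaEnergy lam c γ u v)
      ((u t ^ 2 / 2 * (γ t / c t ^ 3) + u t * v t / c t ^ 2) *
        (γ' - 3 / 2 * γ t ^ 2 / c t)) t := by
  have h₁ := (hv.pow 2).div hc hct
  have h₂ := (hc.const_mul (lam ^ 2)).mul (hu.pow 2)
  have h₃ := ((hγ.pow 2).mul (hu.pow 2)).div ((hc.pow 3).const_mul 4)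
    (mul_ne_zero four_ne_zero (pow_ne_zero 3 hct))
  have h₄ := ((hγ.mul hu).mul hv).div (hc.pow 2) (pow_ne_zero 2 hct)
  refine (((h₁.add h₂).add h₃).add h₄).congr_deriv ?_
  simp only [Pi.pow_apply, Pi.mul_apply]
  field_simp
  ring

theorem stmt5_general (T₀ lam : ℝ) (c u : ℝ → ℝ)
    (hcpos : ∀ t ∈ Set.Ioc 0 T₀, 0 < c t)
    (hc : ∀ t ∈ Set.Ioc 0 T₀, DifferentiableAt ℝ c t)
    (hc' : ∀ t ∈ Set.Ioc 0 T₀, DifferentiableAt ℝ (deriv c) t)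
    (hu : ∀ t ∈ Set.Ioc 0 T₀, DifferentiableAt ℝ u t)
    (hu' : ∀ t ∈ Set.Ioc 0 T₀, DifferentiableAt ℝ (deriv u) t)
    (hode : ∀ t ∈ Set.Ioc 0 T₀, deriv (deriv u) t + lam ^ 2 * (c t) ^ 2 * u t = 0) :
    ∀ t ∈ Set.Ioo 0 T₀,
      deriv (fun s =>
          (deriv u s) ^ 2 / c s + lam ^ 2 * c s * (u s) ^ 2 +
            (deriv c s) ^ 2 * (u s) ^ 2 / (4 * (c s) ^ 3) +
            deriv c s * u s * deriv u s / (c s) ^ 2) t =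
        ((u t) ^ 2 / 2 * (deriv c t / (c t) ^ 3) + u t * deriv u t / (c t) ^ 2) *
          (deriv (deriv c) t - 3 / 2 * (deriv c t) ^ 2 / c t) := by
  intro t ht
  have ht' : t ∈ Ioc 0 T₀ := Ioo_subset_Ioc_self ht
  have hu'' : deriv (deriv u) t = -(lam ^ 2 * c t ^ 2 * u t) := by linarith [hode t ht']
  have hv := (hu' t ht').hasDerivAt
  rw [hu''] at hv
  exact (hasDerivAt_taramaEnergy (hcpos t ht').ne' (hc t ht').hasDerivAt
    (hc' t ht').hasDerivAt (hu t ht').hasDerivAt hv).deriv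

theorem stmt5 (T₀ lam : ℝ) (hT : 0 < T₀) (hlam : 0 < lam) (c u : ℝ → ℝ)
    (hcpos : ∀ t ∈ Set.Ioc 0 T₀, 0 < c t)
    (hc : ∀ t ∈ Set.Ioc 0 T₀, DifferentiableAt ℝ c t)
    (hc' : ∀ t ∈ Set.Ioc 0 T₀, DifferentiableAt ℝ (deriv c) t)
    (hu : ∀ t ∈ Set.Ioc 0 T₀, DifferentiableAt ℝ u t)
    (hu' : ∀ t ∈ Set.Ioc 0 T₀, DifferentiableAt ℝ (deriv u) t)
    (hode : ∀ t ∈ Set.Ioc 0 T₀, deriv (deriv u) t + lam ^ 2 * (c t) ^ 2 * u t = 0) :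
    ∀ t ∈ Set.Ioo 0 T₀,
      deriv (fun s =>
          (deriv u s) ^ 2 / c s + lam ^ 2 * c s * (u s) ^ 2 +
            (deriv c s) ^ 2 * (u s) ^ 2 / (4 * (c s) ^ 3) +
            deriv c s * u s * deriv u s / (c s) ^ 2) t =
        ((u t) ^ 2 / 2 * (deriv c t / (c t) ^ 3) + u t * deriv u t / (c t) ^ 2) *
          (deriv (deriv c) t - 3 / 2 * (deriv c t) ^ 2 / c t) :=
  stmt5_general T₀ lam c u hcpos hc hc' hu hu' hode
end

section
/- Let ω, ψ : (0,T₀] → (0,∞) be nonincreasing with ω(t)(1+ψ(t)) ≤ K₀|log t| for all t ∈ (0,T₀] (T₀ < 1), and suppose |c''(t)| ≤ (ω(t)²/t²)·exp(ψ(t)). Set b_λ = (log λ / λ)·exp(ψ(1/λ)) and assume 1/λ < b_λ < T₀. Then ∫_{b_λ}^{T₀} |c''(s)| ds ≤ K₀²·λ·log λ. -/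
open Set MeasureTheory

theorem stmt7 (T₀ K₀ lam bl : ℝ) (hT : 0 < T₀) (hT1 : T₀ < 1) (hK₀ : 0 < K₀)
    (hlam : Real.exp 1 < lam) (ω ψ c : ℝ → ℝ)
    (hω : AntitoneOn ω (Set.Ioc 0 T₀)) (hψ : AntitoneOn ψ (Set.Ioc 0 T₀))
    (hωpos : ∀ t ∈ Set.Ioc 0 T₀, 0 < ω t) (hψpos : ∀ t ∈ Set.Ioc 0 T₀, 0 < ψ t)
    (hbal : ∀ t ∈ Set.Ioc 0 T₀, ω t * (1 + ψ t) ≤ K₀ * |Real.log t|)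
    (hc : ∀ t ∈ Set.Ioc 0 T₀, DifferentiableAt ℝ c t)
    (hc' : ∀ t ∈ Set.Ioc 0 T₀, DifferentiableAt ℝ (deriv c) t)
    (hccont : ContinuousOn (deriv (deriv c)) (Set.Ioc 0 T₀))
    (hc'' : ∀ t ∈ Set.Ioc 0 T₀,
      |deriv (deriv c) t| ≤ (ω t) ^ 2 / t ^ 2 * Real.exp (ψ t))
    (hbl : bl = Real.log lam / lam * Real.exp (ψ (1 / lam)))
    (hbl1 : 1 / lam < bl) (hbl2 : bl < T₀) :
    (∫ s in bl..T₀, |deriv (deriv c) s|) ≤ K₀ ^ 2 * lam * Real.log lam := by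
  have hLpos : (0:ℝ) < lam := lt_trans (Real.exp_pos 1) hlam
  have hlog : 1 < Real.log lam := (Real.lt_log_iff_exp_lt hLpos).2 hlam
  have hlogpos : 0 < Real.log lam := lt_trans one_pos hlog
  have h1Lpos : (0:ℝ) < 1 / lam := by positivity
  have h1Lmem : 1 / lam ∈ Set.Ioc (0:ℝ) T₀ := ⟨h1Lpos, le_of_lt (lt_trans hbl1 hbl2)⟩
  have hblpos : 0 < bl := lt_trans h1Lpos hbl1
  have hblT : bl ≤ T₀ := le_of_lt hbl2
  have hsub : Set.Icc bl T₀ ⊆ Set.Ioc 0 T₀ := fun x hx => ⟨lt_of_lt_of_le hblpos hx.1, hx.2⟩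
  set M : ℝ := (ω (1/lam)) ^ 2 * Real.exp (ψ (1/lam)) with hM
  have hMpos : 0 < M := by
    have := hωpos _ h1Lmem
    positivity
  -- integrability
  have hfint : IntervalIntegrable (fun s => |deriv (deriv c) s|) volume bl T₀ := by
    apply ContinuousOn.intervalIntegrable
    rw [Set.uIcc_of_le hblT]
    exact (hccont.mono hsub).abs
  have hgint : IntervalIntegrable (fun s => M / s ^ 2) volume bl T₀ := by
    apply ContinuousOn.intervalIntegrable
    rw [Set.uIcc_of_le hblT]
    apply ContinuousOn.div continuousOn_const (by fun_prop)
    intro x hx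
    have := lt_of_lt_of_le hblpos hx.1
    positivity
  -- pointwise bound
  have hpt : ∀ s ∈ Set.Icc bl T₀, |deriv (deriv c) s| ≤ M / s ^ 2 := by
    intro s hs
    have hsmem := hsub hs
    have hspos : 0 < s := hsmem.1
    have h1s : 1 / lam ≤ s := le_trans (le_of_lt hbl1) hs.1
    have hω1 : ω s ≤ ω (1/lam) := hω h1Lmem hsmem h1s
    have hψ1 : ψ s ≤ ψ (1/lam) := hψ h1Lmem hsmem h1s
    refine le_trans (hc'' s hsmem) ?_
    rw [div_mul_eq_mul_div, hM]
    apply div_le_div_of_nonneg_right ?_ (by positivity)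
    have h2 : ω s ^ 2 ≤ ω (1/lam) ^ 2 := by
      have := hωpos s hsmem
      nlinarith
    have h3 : Real.exp (ψ s) ≤ Real.exp (ψ (1/lam)) := Real.exp_le_exp.2 hψ1
    have := Real.exp_pos (ψ s)
    nlinarith [hωpos _ h1Lmem]
  have hmono := intervalIntegral.integral_mono_on hblT hfint hgint hpt
  -- compute the integral of M / s^2
  have hzero : (0:ℝ) ∉ Set.uIcc bl T₀ := by
    rw [Set.uIcc_of_le hblT]
    intro h
    exact absurd h.1 (not_le.2 hblpos)
  have hcomp : (∫ s in bl..T₀, M / s ^ 2) = M * (bl⁻¹ - T₀⁻¹) := by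
    have : (∫ s in bl..T₀, M / s ^ 2) = M * ∫ s in bl..T₀, (s:ℝ) ^ (-2 : ℤ) := by
      rw [← intervalIntegral.integral_const_mul]
      apply intervalIntegral.integral_congr
      intro x hx
      have hx0 : x ≠ 0 := fun h => hzero (h ▸ hx)
      show M / x ^ 2 = M * x ^ (-2:ℤ)
      rw [zpow_neg, div_eq_mul_inv]
      norm_num
    rw [this, integral_zpow (Or.inr ⟨by norm_num, hzero⟩)]
    norm_num
    left
    ring
  -- final arithmetic
  have hω1bd : ω (1/lam) ≤ K₀ * Real.log lam := by
    have hb := hbal _ h1Lmem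
    have hlog1 : Real.log (1/lam) = -Real.log lam := by
      rw [one_div, Real.log_inv]
    rw [hlog1, abs_neg, abs_of_pos hlogpos] at hb
    nlinarith [hωpos _ h1Lmem, hψpos _ h1Lmem]
  have hωnn : 0 < ω (1/lam) := hωpos _ h1Lmem
  have hblval : M * bl⁻¹ = (ω (1/lam))^2 * lam / Real.log lam := by
    rw [hM, hbl]
    have := Real.exp_pos (ψ (1/lam))
    field_simp
  calc (∫ s in bl..T₀, |deriv (deriv c) s|) ≤ M * (bl⁻¹ - T₀⁻¹) := hcomp ▸ hmono
    _ ≤ M * bl⁻¹ := by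
        have : (0:ℝ) < T₀⁻¹ := by positivity
        nlinarith
    _ = (ω (1/lam))^2 * lam / Real.log lam := hblval
    _ ≤ (K₀ * Real.log lam)^2 * lam / Real.log lam := by
        gcongr
    _ = K₀ ^ 2 * lam * Real.log lam := by
        field_simp
end

section
/- Under the hypotheses of the borderline well-posedness theorem — ω, ψ : (0,T₀] → (0,∞) nonincreasing with ω(t)(1+ψ(t)) ≤ K₀|log t|, c ∈ C²((0,T₀]) with μ₁ ≤ c(t) ≤ μ₂ (μ₁ > 0), |c'(t)| ≤ ω(t)/t and |c''(t)| ≤ (ω(t)²/t²)exp(ψ(t)) — there exist positive constants λ₀, M, δ depending only on T₀, μ₁, μ₂, K₀ such that for every λ ≥ λ₀ every solution u_λ of u'' + λ²c(t)u = 0 satisfies |u_λ'(t)|² + λ²|u_λ(t)|² ≤ M·(|u_λ'(0)|² + λ²|u_λ(0)|²)·λ^δ for all t ∈ [0,T₀]. -/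
/-!
Three energies are propagated from `0` to `T₀`, switching at `m = (1 + K₀ log λ) / λ` and at the
point `b` where `ω(t) e^{ψ(t)}` drops below `λ t`.

On `[0, m]` the plain energy `u'² + λ²u²` grows at rate `O(λ)`, hence by `e^{O(1 + K₀ log λ)}`.

On `[m, b]` the weighted energy `u'² + λ² c u²` grows at rate `|c'| / c ≤ ω(t) / (μ₁ t)`. For
`x < b` we have `ψ ≥ log (λ x / ω x)` on `(0, x]`, so the balance condition gives
`ω ≤ K₀ log λ / (1 + log (λ x / ω x))` on `[m, x]`, while `log (x / m) ≤ log (λ x / ω x)`: the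
growth over `[m, x]` is at most `λ^{K₀ / μ₁}`.

On `[b, T₀]` the corrected energy is used, whose derivative only involves `c''` and `(c')²`; both
are `≤ ω² e^ψ / t² ≤ λ b (1 + K₀ log λ) / t²` there, and `∫_b^∞ b / t² dt = 1`, so the growth is
again `e^{O(1 + K₀ log λ)}`. After `b` also `|c'| ≤ λ`, which makes the corrected energy
comparable to the plain one.

The total loss is `e^{O(1 + K₀ log λ)} = O(λ^δ)`.
-/

open Set Real

theorem le_exp_sub_mul_of_hasDerivAt_le {E E' R R' : ℝ → ℝ} {p q : ℝ} (hpq : p ≤ q)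
    (hE : ContinuousOn E (Icc p q)) (hR : ContinuousOn R (Icc p q))
    (hE' : ∀ t ∈ Ioo p q, HasDerivAt E (E' t) t) (hR' : ∀ t ∈ Ioo p q, HasDerivAt R (R' t) t)
    (h : ∀ t ∈ Ioo p q, E' t ≤ R' t * E t) :
    E q ≤ exp (R q - R p) * E p := by
  have hanti : AntitoneOn (fun t => E t * exp (-R t)) (Icc p q) := by
    refine antitoneOn_of_hasDerivWithinAt_nonpos (convex_Icc p q) (hE.mul hR.neg.rexp)
      (f' := fun t => E' t * exp (-R t) + E t * (exp (-R t) * -R' t)) ?_ ?_ <;>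
      intro t ht <;> rw [interior_Icc] at ht
    · exact ((hE' t ht).mul (hR' t ht).neg.exp).hasDerivWithinAt
    · nlinarith [exp_pos (-R t), h t ht]
  have key := hanti (left_mem_Icc.2 hpq) (right_mem_Icc.2 hpq) hpq
  calc E q = E q * exp (-R q) * exp (R q) := by rw [mul_assoc, ← exp_add]; simp
    _ ≤ E p * exp (-R p) * exp (R q) := by gcongr
    _ = exp (R q - R p) * E p := by rw [mul_assoc, ← exp_add]; ring_nf

theorem exists_crossing_of_antitoneOn {g : ℝ → ℝ} {T k : ℝ} (hg : AntitoneOn g (Ioc 0 T))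
    (hk : 0 < k) (hgT : 0 < g T) (hgkT : g T < k * T) :
    ∃ b ∈ Ioc 0 T, (∀ s ∈ Ioo 0 b, k * s ≤ g s) ∧ ∀ s ∈ Ioc b T, g s ≤ k * b := by
  set S := {s ∈ Ioc 0 T | g s < k * s}
  have hT : T ∈ Ioc 0 T := ⟨by nlinarith, le_rfl⟩
  have hTS : T ∈ S := ⟨hT, hgkT⟩
  have hbdd : BddBelow S := ⟨0, fun s hs => hs.1.1.le⟩
  have hlow : g T / k ≤ sInf S := by
    refine le_csInf ⟨T, hTS⟩ fun s hs => (div_le_iff₀ hk).2 ?_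
    linarith [hg hs.1 hT hs.1.2, hs.2]
  refine ⟨sInf S, ⟨(div_pos hgT hk).trans_le hlow, csInf_le hbdd hTS⟩, ?_, ?_⟩
  · intro s hs
    by_contra! hgs
    exact (csInf_le hbdd ⟨⟨hs.1, hs.2.le.trans (csInf_le hbdd hTS)⟩, hgs⟩).not_gt hs.2
  · intro s hs
    by_contra! hgs
    obtain ⟨r, hrS, hr⟩ := exists_lt_of_csInf_lt ⟨T, hTS⟩
      (lt_min hs.1 ((lt_div_iff₀ hk).2 (by linarith)) : sInf S < min s (g s / k))
    have hrs : r < s := hr.trans_le (min_le_left _ _)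
    have hrg : k * r < g s := by
      have := hr.trans_le (min_le_right _ _); rwa [lt_div_iff₀ hk, mul_comm] at this
    linarith [hg hrS.1 ⟨hrS.1.1.trans hrs, hs.2⟩ hrs.le, hrS.2]

structure IsSolutionOn (c : ℝ → ℝ) (lam : ℝ) (S : Set ℝ) (u : ℝ → ℝ) : Prop where
  differentiableAt : ∀ t ∈ S, DifferentiableAt ℝ u t
  differentiableAt_deriv : ∀ t ∈ S, DifferentiableAt ℝ (deriv u) t
  deriv_deriv_add : ∀ t ∈ S, deriv (deriv u) t + lam ^ 2 * c t * u t = 0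

theorem IsSolutionOn.mono {c u : ℝ → ℝ} {lam : ℝ} {S S' : Set ℝ} (hu : IsSolutionOn c lam S u)
    (hS : S' ⊆ S) : IsSolutionOn c lam S' u :=
  ⟨fun t ht => hu.1 t (hS ht), fun t ht => hu.2 t (hS ht), fun t ht => hu.3 t (hS ht)⟩

noncomputable def energy (u : ℝ → ℝ) (lam t : ℝ) : ℝ := deriv u t ^ 2 + lam ^ 2 * u t ^ 2

noncomputable def weightedEnergy (c u : ℝ → ℝ) (lam t : ℝ) : ℝ :=
  deriv u t ^ 2 + lam ^ 2 * (c t * u t ^ 2)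

/-- For WKB solutions `u ≈ c^{-1/4} e^{± i λ ∫ √c}` one has `u' + c' / (4c) u ≈ ± i λ √c u`, which
makes this energy constant up to terms in `c''` and `(c')²`. -/
noncomputable def correctedEnergy (c u : ℝ → ℝ) (lam t : ℝ) : ℝ :=
  (deriv u t + deriv c t / (4 * c t) * u t) ^ 2 / √(c t) + lam ^ 2 * (√(c t) * u t ^ 2)

section Derivatives

variable {c u : ℝ → ℝ} {lam t : ℝ}

theorem energy_nonneg : 0 ≤ energy u lam t := by unfold energy; positivity

theorem weightedEnergy_nonneg (hc : 0 ≤ c t) : 0 ≤ weightedEnergy c u lam t := by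
  unfold weightedEnergy; positivity

theorem correctedEnergy_nonneg : 0 ≤ correctedEnergy c u lam t := by
  unfold correctedEnergy; positivity

theorem hasDerivAt_energy (hu : IsSolutionOn c lam {t} u) :
    HasDerivAt (energy u lam) (2 * lam ^ 2 * (1 - c t) * (u t * deriv u t)) t := by
  have hode : deriv (deriv u) t = -(lam ^ 2 * c t * u t) := by linarith [hu.3 t rfl]
  refine (((hu.2 t rfl).hasDerivAt.pow 2).add
    (((hu.1 t rfl).hasDerivAt.pow 2).const_mul (lam ^ 2))).congr_deriv ?_
  rw [hode]; push_cast; ring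

theorem hasDerivAt_weightedEnergy (hu : IsSolutionOn c lam {t} u) (hc : DifferentiableAt ℝ c t) :
    HasDerivAt (weightedEnergy c u lam) (lam ^ 2 * (deriv c t * u t ^ 2)) t := by
  have hode : deriv (deriv u) t = -(lam ^ 2 * c t * u t) := by linarith [hu.3 t rfl]
  refine (((hu.2 t rfl).hasDerivAt.pow 2).add ((hc.hasDerivAt.mul
    ((hu.1 t rfl).hasDerivAt.pow 2)).const_mul (lam ^ 2))).congr_deriv ?_
  rw [hode]; simp only [Pi.pow_apply]; push_cast; ring

theorem hasDerivAt_correctedEnergy (hu : IsSolutionOn c lam {t} u) (hc : DifferentiableAt ℝ c t)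
    (hc' : DifferentiableAt ℝ (deriv c) t) (hct : 0 < c t) :
    HasDerivAt (correctedEnergy c u lam)
      (2 * (deriv (deriv c) t / (4 * c t) - 5 * (deriv c t / (4 * c t)) ^ 2) / √(c t) *
        (u t * (deriv u t + deriv c t / (4 * c t) * u t))) t := by
  have hode : deriv (deriv u) t = -(lam ^ 2 * c t * u t) := by linarith [hu.3 t rfl]
  have hu₁ := (hu.1 t rfl).hasDerivAt
  have hσ : HasDerivAt (fun r => √(c r)) (deriv c t / (2 * √(c t))) t :=
    hc.hasDerivAt.sqrt hct.ne'
  have hd := hc'.hasDerivAt.div (hc.hasDerivAt.const_mul 4) (by positivity)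
  have hw := (hu.2 t rfl).hasDerivAt.add (hd.mul hu₁)
  refine (((hw.pow 2).div hσ (sqrt_pos.2 hct).ne').add
    ((hσ.mul (hu₁.pow 2)).const_mul (lam ^ 2))).congr_deriv ?_
  have hσsq : √(c t) ^ 2 = c t := sq_sqrt hct.le
  have hσne : √(c t) ≠ 0 := (sqrt_pos.2 hct).ne'
  rw [hode]
  simp only [Pi.pow_apply, Pi.add_apply, Pi.mul_apply, Pi.div_apply]
  generalize √(c t) = σ at hσsq hσne ⊢
  rw [← hσsq]
  push_cast
  field_simp
  ring

end Derivatives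

theorem abs_div_sub_five_mul_sq_le {P Q X μ c : ℝ} (hμ : 0 < μ) (hc : μ ≤ c) (hP : P ^ 2 ≤ X)
    (hQ : |Q| ≤ X) :
    |Q / (4 * c) - 5 * (P / (4 * c)) ^ 2| ≤ (1 / (4 * μ) + 5 / (16 * μ ^ 2)) * X := by
  have hc0 : 0 < c := hμ.trans_le hc
  have hX : 0 ≤ X := (abs_nonneg Q).trans hQ
  have h1 : |Q / (4 * c)| ≤ X / (4 * μ) := by
    rw [abs_div, abs_of_pos (by positivity : (0 : ℝ) < 4 * c)]
    exact div_le_div₀ hX hQ (by positivity) (by linarith)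
  have h2 : (P / (4 * c)) ^ 2 ≤ X / (16 * μ ^ 2) := by
    rw [div_pow]
    exact div_le_div₀ hX (by linarith) (by positivity) (by nlinarith)
  calc |Q / (4 * c) - 5 * (P / (4 * c)) ^ 2|
      ≤ |Q / (4 * c)| + |5 * (P / (4 * c)) ^ 2| := abs_sub _ _
    _ ≤ X / (4 * μ) + 5 * (X / (16 * μ ^ 2)) := by
      rw [abs_of_nonneg (by positivity : 0 ≤ 5 * (P / (4 * c)) ^ 2)]; linarith
    _ = (1 / (4 * μ) + 5 / (16 * μ ^ 2)) * X := by ring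

theorem two_mul_div_mul_le {Δ σ y w lam : ℝ} (hσ : 0 < σ) (hlam : 0 < lam) :
    2 * Δ / σ * (y * w) ≤ |Δ| / (lam * σ) * (w ^ 2 / σ + lam ^ 2 * (σ * y ^ 2)) := by
  have hamgm : 2 * Δ * (lam * σ * y * w) ≤ |Δ| * (w ^ 2 + (lam * σ * y) ^ 2) := by
    calc 2 * Δ * (lam * σ * y * w) ≤ |2 * Δ * (lam * σ * y * w)| := le_abs_self _
      _ = |Δ| * (2 * |lam * σ * y| * |w|) := by simp only [abs_mul, abs_two]; ring
      _ ≤ |Δ| * (w ^ 2 + (lam * σ * y) ^ 2) := by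
          gcongr
          simpa only [sq_abs, add_comm] using two_mul_le_add_sq |lam * σ * y| |w|
  have hrhs : |Δ| / (lam * σ) * (w ^ 2 / σ + lam ^ 2 * (σ * y ^ 2))
      = |Δ| * (w ^ 2 + (lam * σ * y) ^ 2) / (lam * σ ^ 2) := by
    field_simp
  rw [hrhs, le_div_iff₀ (by positivity)]
  calc 2 * Δ / σ * (y * w) * (lam * σ ^ 2) = 2 * Δ * (lam * σ * y * w) := by field_simp
    _ ≤ _ := hamgm

theorem sq_add_sq_le_of_abs_le {x y d σ a b κ lam : ℝ} (ha : 0 < a) (haσ : a ≤ σ) (hσb : σ ≤ b)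
    (hd : |d| ≤ κ * lam) :
    x ^ 2 + lam ^ 2 * y ^ 2 ≤
      (2 * b + (2 + 2 * κ ^ 2) / a) * ((x + d * y) ^ 2 / σ + lam ^ 2 * (σ * y ^ 2)) := by
  have hσ : 0 < σ := ha.trans_le haσ
  have hdy : d ^ 2 * y ^ 2 ≤ κ ^ 2 * (lam ^ 2 * y ^ 2) := by
    have := sq_le_sq' (neg_le_of_abs_le hd) (le_of_abs_le hd)
    nlinarith [sq_nonneg y]
  have hx : x ^ 2 ≤ 2 * (x + d * y) ^ 2 + 2 * κ ^ 2 * (lam ^ 2 * y ^ 2) := by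
    nlinarith [sq_nonneg (x + 2 * d * y)]
  have hw : (x + d * y) ^ 2 ≤ b * ((x + d * y) ^ 2 / σ) := by
    calc (x + d * y) ^ 2 = σ * ((x + d * y) ^ 2 / σ) := (mul_div_cancel₀ _ hσ.ne').symm
      _ ≤ b * ((x + d * y) ^ 2 / σ) := by gcongr
  have hy : lam ^ 2 * y ^ 2 ≤ lam ^ 2 * (σ * y ^ 2) / a := by
    rw [le_div_iff₀ ha]; nlinarith [sq_nonneg (lam * y)]
  have hrest : 0 ≤ 2 * b * (lam ^ 2 * (σ * y ^ 2)) + (2 + 2 * κ ^ 2) / a * ((x + d * y) ^ 2 / σ)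
      + lam ^ 2 * (σ * y ^ 2) / a := by
    have : 0 ≤ b := hσ.le.trans hσb
    positivity
  have hexp : (2 * b + (2 + 2 * κ ^ 2) / a) * ((x + d * y) ^ 2 / σ + lam ^ 2 * (σ * y ^ 2))
      = 2 * (b * ((x + d * y) ^ 2 / σ)) + (1 + 2 * κ ^ 2) * (lam ^ 2 * (σ * y ^ 2) / a)
        + (2 * b * (lam ^ 2 * (σ * y ^ 2)) + (2 + 2 * κ ^ 2) / a * ((x + d * y) ^ 2 / σ)
          + lam ^ 2 * (σ * y ^ 2) / a) := by
    ring
  rw [hexp]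
  nlinarith

theorem sq_div_add_le_of_abs_le {x y d σ a b κ lam : ℝ} (ha : 0 < a) (haσ : a ≤ σ) (hσb : σ ≤ b)
    (hd : |d| ≤ κ * lam) :
    (x + d * y) ^ 2 / σ + lam ^ 2 * (σ * y ^ 2) ≤
      (2 * b + (2 + 2 * κ ^ 2) / a) * (x ^ 2 + lam ^ 2 * y ^ 2) := by
  have hσ : 0 < σ := ha.trans_le haσ
  have hdy : d ^ 2 * y ^ 2 ≤ κ ^ 2 * (lam ^ 2 * y ^ 2) := by
    have := sq_le_sq' (neg_le_of_abs_le hd) (le_of_abs_le hd)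
    nlinarith [sq_nonneg y]
  have hw : (x + d * y) ^ 2 / σ ≤ (2 * x ^ 2 + 2 * κ ^ 2 * (lam ^ 2 * y ^ 2)) / a :=
    div_le_div₀ (by positivity) (by nlinarith [sq_nonneg (x - d * y)]) ha haσ
  have hy : lam ^ 2 * (σ * y ^ 2) ≤ b * (lam ^ 2 * y ^ 2) := by
    nlinarith [mul_nonneg (sq_nonneg lam) (sq_nonneg y)]
  have hrest : 0 ≤ 2 * b * x ^ 2 + b * (lam ^ 2 * y ^ 2) + 2 * κ ^ 2 / a * x ^ 2
      + 2 / a * (lam ^ 2 * y ^ 2) := by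
    have : 0 ≤ b := hσ.le.trans hσb
    positivity
  have hexp : (2 * b + (2 + 2 * κ ^ 2) / a) * (x ^ 2 + lam ^ 2 * y ^ 2)
      = (2 * x ^ 2 + 2 * κ ^ 2 * (lam ^ 2 * y ^ 2)) / a + b * (lam ^ 2 * y ^ 2)
        + (2 * b * x ^ 2 + b * (lam ^ 2 * y ^ 2) + 2 * κ ^ 2 / a * x ^ 2
          + 2 / a * (lam ^ 2 * y ^ 2)) := by
    ring
  rw [hexp]
  linarith

section Zones

variable {c u : ℝ → ℝ} {lam μ k p q : ℝ}

theorem energy_le_exp_mul (hu : IsSolutionOn c lam (Icc p q) u) (hpq : p ≤ q) (hlam : 0 < lam)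
    (hc : ∀ s ∈ Ioo p q, 0 < c s ∧ c s ≤ μ) :
    energy u lam q ≤ exp ((1 + μ) * lam * (q - p)) * energy u lam p := by
  have hE : ∀ s ∈ Icc p q, HasDerivAt (energy u lam)
      (2 * lam ^ 2 * (1 - c s) * (u s * deriv u s)) s :=
    fun s hs => hasDerivAt_energy (hu.mono (singleton_subset_iff.2 hs))
  have hR : ∀ s, HasDerivAt (fun s => (1 + μ) * lam * s) ((1 + μ) * lam) s := fun s => by
    simpa using (hasDerivAt_id s).const_mul ((1 + μ) * lam)
  have key := le_exp_sub_mul_of_hasDerivAt_le hpq (HasDerivAt.continuousOn hE)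
    (HasDerivAt.continuousOn fun s _ => hR s) (fun s hs => hE s (Ioo_subset_Icc_self hs))
    (fun s _ => hR s) fun s hs => by
      obtain ⟨hc0, hcμ⟩ := hc s hs
      unfold energy
      nlinarith [mul_nonneg (mul_nonneg hlam.le (by linarith : 0 ≤ 1 + μ + (1 - c s)))
          (sq_nonneg (deriv u s - lam * u s)),
        mul_nonneg (mul_nonneg hlam.le (by linarith : 0 ≤ 1 + μ - (1 - c s)))
          (sq_nonneg (deriv u s + lam * u s))]
  rwa [← mul_sub] at key

theorem weightedEnergy_le_exp_mul (hu : IsSolutionOn c lam (Icc p q) u) (hp : 0 < p) (hpq : p ≤ q)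
    (hμ : 0 < μ) (hc : ∀ s ∈ Icc p q, DifferentiableAt ℝ c s) (hcμ : ∀ s ∈ Icc p q, μ ≤ c s)
    (hc' : ∀ s ∈ Ioo p q, |deriv c s| ≤ k / s) :
    weightedEnergy c u lam q ≤ exp (k / μ * log (q / p)) * weightedEnergy c u lam p := by
  have hE : ∀ s ∈ Icc p q, HasDerivAt (weightedEnergy c u lam)
      (lam ^ 2 * (deriv c s * u s ^ 2)) s :=
    fun s hs => hasDerivAt_weightedEnergy (hu.mono (singleton_subset_iff.2 hs)) (hc s hs)
  have hR : ∀ s ∈ Icc p q, HasDerivAt (fun s => k / μ * log s) (k / μ * s⁻¹) s :=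
    fun s hs => (hasDerivAt_log (hp.trans_le hs.1).ne').const_mul (k / μ)
  have key := le_exp_sub_mul_of_hasDerivAt_le hpq (HasDerivAt.continuousOn hE)
    (HasDerivAt.continuousOn hR) (fun s hs => hE s (Ioo_subset_Icc_self hs))
    (fun s hs => hR s (Ioo_subset_Icc_self hs)) fun s hs => by
      have hcs := hcμ s (Ioo_subset_Icc_self hs)
      have hk : 0 ≤ k / s := (abs_nonneg _).trans (hc' s hs)
      have h1 : deriv c s ≤ k / s := (le_abs_self _).trans (hc' s hs)
      have h2 : k / s * μ ≤ k / s * c s := mul_le_mul_of_nonneg_left hcs hk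
      have hrate : k / μ * s⁻¹ = k / s / μ := by field_simp
      have hL : 0 ≤ lam ^ 2 * u s ^ 2 := by positivity
      have h4 : lam ^ 2 * (deriv c s * u s ^ 2) ≤ k / s / μ * (lam ^ 2 * (c s * u s ^ 2)) := by
        rw [div_mul_eq_mul_div, le_div_iff₀ hμ]
        nlinarith [mul_le_mul_of_nonneg_right (mul_le_mul_of_nonneg_right h1 hL) hμ.le,
          mul_le_mul_of_nonneg_right h2 hL]
      rw [hrate, weightedEnergy]
      nlinarith [mul_nonneg (div_nonneg hk hμ.le) (sq_nonneg (deriv u s))]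
  rwa [← mul_sub, ← log_div (hp.trans_le hpq).ne' hp.ne'] at key

theorem correctedEnergy_le_exp_mul (hu : IsSolutionOn c lam (Icc p q) u) (hp : 0 < p)
    (hpq : p ≤ q) (hlam : 0 < lam) (hμ : 0 < μ) (hc : ∀ s ∈ Icc p q, DifferentiableAt ℝ c s)
    (hc₂ : ∀ s ∈ Icc p q, DifferentiableAt ℝ (deriv c) s) (hcμ : ∀ s ∈ Icc p q, μ ≤ c s)
    (hc' : ∀ s ∈ Ioo p q, deriv c s ^ 2 ≤ k / s ^ 2)
    (hc'' : ∀ s ∈ Ioo p q, |deriv (deriv c) s| ≤ k / s ^ 2) :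
    correctedEnergy c u lam q ≤
      exp ((1 / (4 * μ) + 5 / (16 * μ ^ 2)) / √μ * k / lam * (1 / p - 1 / q)) *
        correctedEnergy c u lam p := by
  set C := (1 / (4 * μ) + 5 / (16 * μ ^ 2)) / √μ * k / lam
  have hE : ∀ s ∈ Icc p q, HasDerivAt (correctedEnergy c u lam)
      (2 * (deriv (deriv c) s / (4 * c s) - 5 * (deriv c s / (4 * c s)) ^ 2) / √(c s) *
        (u s * (deriv u s + deriv c s / (4 * c s) * u s))) s :=
    fun s hs => hasDerivAt_correctedEnergy (hu.mono (singleton_subset_iff.2 hs)) (hc s hs)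
      (hc₂ s hs) (hμ.trans_le (hcμ s hs))
  have hR : ∀ s ∈ Icc p q, HasDerivAt (fun s => -C * s⁻¹) (-C * -(s ^ 2)⁻¹) s :=
    fun s hs => (hasDerivAt_inv (hp.trans_le hs.1).ne').const_mul (-C)
  have key := le_exp_sub_mul_of_hasDerivAt_le hpq (HasDerivAt.continuousOn hE)
    (HasDerivAt.continuousOn hR) (fun s hs => hE s (Ioo_subset_Icc_self hs))
    (fun s hs => hR s (Ioo_subset_Icc_self hs)) fun s hs => by
      have hcs := hcμ s (Ioo_subset_Icc_self hs)
      have hΔ := abs_div_sub_five_mul_sq_le hμ hcs (hc' s hs) (hc'' s hs)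
      refine (two_mul_div_mul_le (sqrt_pos.2 (hμ.trans_le hcs)) hlam).trans
        (mul_le_mul_of_nonneg_right ?_ correctedEnergy_nonneg)
      calc |_| / (lam * √(c s)) ≤ (1 / (4 * μ) + 5 / (16 * μ ^ 2)) * (k / s ^ 2) / (lam * √μ) :=
            div_le_div₀ ((abs_nonneg _).trans hΔ) hΔ (by positivity) (by gcongr)
        _ = -C * -(s ^ 2)⁻¹ := by simp only [C]; field_simp
  have hexp : -C * q⁻¹ - -C * p⁻¹ = C * (1 / p - 1 / q) := by ring
  rwa [hexp] at key

end Zones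

section Comparison

variable {c u : ℝ → ℝ} {lam μ₁ μ₂ t : ℝ}

theorem energy_le_weightedEnergy (hμ₁ : 0 < μ₁) (hc : μ₁ ≤ c t) :
    energy u lam t ≤ (1 + μ₁⁻¹) * weightedEnergy c u lam t := by
  have h : lam ^ 2 * u t ^ 2 ≤ μ₁⁻¹ * (lam ^ 2 * (c t * u t ^ 2)) := by
    rw [← div_eq_inv_mul, le_div_iff₀ hμ₁]
    nlinarith [mul_nonneg (sq_nonneg lam) (sq_nonneg (u t))]
  have : 0 ≤ μ₁⁻¹ * deriv u t ^ 2 + lam ^ 2 * (c t * u t ^ 2) := by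
    have := hμ₁.trans_le hc; positivity
  unfold energy weightedEnergy
  linarith

theorem weightedEnergy_le_energy (hc : 0 ≤ c t) (hc' : c t ≤ μ₂) :
    weightedEnergy c u lam t ≤ (1 + μ₂) * energy u lam t := by
  have h : lam ^ 2 * (c t * u t ^ 2) ≤ μ₂ * (lam ^ 2 * u t ^ 2) := by
    nlinarith [mul_nonneg (sq_nonneg lam) (sq_nonneg (u t))]
  have : 0 ≤ μ₂ * deriv u t ^ 2 + lam ^ 2 * u t ^ 2 := by
    have := hc.trans hc'; positivity
  unfold energy weightedEnergy
  linarith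

theorem abs_deriv_div_le (hμ₁ : 0 < μ₁) (hc : μ₁ ≤ c t) (hc' : |deriv c t| ≤ lam) :
    |deriv c t / (4 * c t)| ≤ (4 * μ₁)⁻¹ * lam := by
  rw [abs_div, abs_of_pos (show 0 < 4 * c t by linarith), ← div_eq_inv_mul]
  exact div_le_div₀ ((abs_nonneg _).trans hc') hc' (by positivity) (by linarith)

theorem energy_le_correctedEnergy (hμ₁ : 0 < μ₁) (hc : μ₁ ≤ c t ∧ c t ≤ μ₂)
    (hc' : |deriv c t| ≤ lam) :
    energy u lam t ≤ (2 * √μ₂ + (2 + 2 * (4 * μ₁)⁻¹ ^ 2) / √μ₁) * correctedEnergy c u lam t :=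
  sq_add_sq_le_of_abs_le (sqrt_pos.2 hμ₁) (sqrt_le_sqrt hc.1) (sqrt_le_sqrt hc.2)
    (abs_deriv_div_le hμ₁ hc.1 hc')

theorem correctedEnergy_le_energy (hμ₁ : 0 < μ₁) (hc : μ₁ ≤ c t ∧ c t ≤ μ₂)
    (hc' : |deriv c t| ≤ lam) :
    correctedEnergy c u lam t ≤ (2 * √μ₂ + (2 + 2 * (4 * μ₁)⁻¹ ^ 2) / √μ₁) * energy u lam t :=
  sq_div_add_le_of_abs_le (sqrt_pos.2 hμ₁) (sqrt_le_sqrt hc.1) (sqrt_le_sqrt hc.2)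
    (abs_deriv_div_le hμ₁ hc.1 hc')

theorem one_le_two_mul_sqrt_add (hμ₁ : 0 < μ₁) (hμ : μ₁ ≤ μ₂) :
    1 ≤ 2 * √μ₂ + (2 + 2 * (4 * μ₁)⁻¹ ^ 2) / √μ₁ := by
  have ha := sqrt_pos.2 hμ₁
  have h1 : √μ₁ ≤ √μ₂ := sqrt_le_sqrt hμ
  have h2 : 2 / √μ₁ ≤ (2 + 2 * (4 * μ₁)⁻¹ ^ 2) / √μ₁ :=
    div_le_div_of_nonneg_right (le_add_of_nonneg_right (by positivity)) ha.le
  have h3 : 1 ≤ 2 * √μ₁ + 2 / √μ₁ := by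
    rw [← sub_nonneg]
    have : 2 * √μ₁ + 2 / √μ₁ - 1 = (2 * (√μ₁ - 1 / 4) ^ 2 + 15 / 8) / √μ₁ := by
      field_simp
      ring
    rw [this]; positivity
  linarith

end Comparison

structure BorderlineCoeff (T₀ μ₁ μ₂ K₀ : ℝ) (ω ψ c : ℝ → ℝ) : Prop where
  antitoneOn_ω : AntitoneOn ω (Ioc 0 T₀)
  antitoneOn_ψ : AntitoneOn ψ (Ioc 0 T₀)
  ω_pos : ∀ t ∈ Ioc 0 T₀, 0 < ω t
  ψ_pos : ∀ t ∈ Ioc 0 T₀, 0 < ψ t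
  ω_mul_one_add_ψ_le : ∀ t ∈ Ioc 0 T₀, ω t * (1 + ψ t) ≤ K₀ * |log t|
  differentiableAt : ∀ t ∈ Ioc 0 T₀, DifferentiableAt ℝ c t
  differentiableAt_deriv : ∀ t ∈ Ioc 0 T₀, DifferentiableAt ℝ (deriv c) t
  bounds : ∀ t ∈ Ioc 0 T₀, μ₁ ≤ c t ∧ c t ≤ μ₂
  abs_deriv_le : ∀ t ∈ Ioc 0 T₀, |deriv c t| ≤ ω t / t
  abs_deriv_deriv_le : ∀ t ∈ Ioc 0 T₀, |deriv (deriv c) t| ≤ ω t ^ 2 / t ^ 2 * exp (ψ t)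

namespace BorderlineCoeff

variable {T₀ μ₁ μ₂ K₀ : ℝ} {ω ψ c u : ℝ → ℝ} {lam s : ℝ}

theorem ω_mul_one_add_ψ_le_log (h : BorderlineCoeff T₀ μ₁ μ₂ K₀ ω ψ c) (hT₁ : T₀ ≤ 1)
    (hK₀ : 0 ≤ K₀) (hlam : 0 < lam) (hs : 1 / lam ≤ s) (hsT : s ≤ T₀) :
    ω s * (1 + ψ s) ≤ K₀ * log lam := by
  have hs0 : 0 < s := (one_div_pos.2 hlam).trans_le hs
  have hlog : |log s| ≤ log lam := by
    rw [abs_of_nonpos (log_nonpos hs0.le (hsT.trans hT₁)), neg_le, ← log_inv, ← one_div]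
    exact log_le_log (one_div_pos.2 hlam) hs
  exact (h.ω_mul_one_add_ψ_le s ⟨hs0, hsT⟩).trans (mul_le_mul_of_nonneg_left hlog hK₀)

theorem ω_le_log (h : BorderlineCoeff T₀ μ₁ μ₂ K₀ ω ψ c) (hT₁ : T₀ ≤ 1) (hK₀ : 0 ≤ K₀)
    (hlam : 0 < lam) (hs : 1 / lam ≤ s) (hsT : s ≤ T₀) : ω s ≤ K₀ * log lam := by
  have hs' : s ∈ Ioc 0 T₀ := ⟨(one_div_pos.2 hlam).trans_le hs, hsT⟩
  nlinarith [h.ω_mul_one_add_ψ_le_log hT₁ hK₀ hlam hs hsT, h.ω_pos s hs', h.ψ_pos s hs']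

theorem ω_le_ω_mul_exp_ψ (h : BorderlineCoeff T₀ μ₁ μ₂ K₀ ω ψ c) (hs : s ∈ Ioc 0 T₀) :
    ω s ≤ ω s * exp (ψ s) :=
  le_mul_of_one_le_right (h.ω_pos s hs).le (one_le_exp (h.ψ_pos s hs).le)

theorem antitoneOn_ω_mul_exp_ψ (h : BorderlineCoeff T₀ μ₁ μ₂ K₀ ω ψ c) :
    AntitoneOn (fun s => ω s * exp (ψ s)) (Ioc 0 T₀) := fun _ hr _ hs hrs =>
  mul_le_mul (h.antitoneOn_ω hr hs hrs) (exp_le_exp.2 (h.antitoneOn_ψ hr hs hrs))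
    (exp_pos _).le (h.ω_pos _ hr).le

theorem energy_le_of_mul_le (h : BorderlineCoeff T₀ μ₁ μ₂ K₀ ω ψ c) (hμ₁ : 0 < μ₁)
    (hμ₂ : 0 ≤ μ₂) (hlam : 0 < lam) (hu : IsSolutionOn c lam (Icc 0 T₀) u) {W : ℝ}
    (hs : s ∈ Icc 0 T₀) (hsW : lam * s ≤ W) :
    energy u lam s ≤ exp ((1 + μ₂) * W) * energy u lam 0 := by
  refine (energy_le_exp_mul (μ := μ₂) (hu.mono (Icc_subset_Icc_right hs.2)) hs.1 hlam
    fun r hr => ?_).trans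
    (mul_le_mul_of_nonneg_right (exp_le_exp.2 ?_) energy_nonneg)
  · have := h.bounds r ⟨hr.1, hr.2.le.trans hs.2⟩
    exact ⟨hμ₁.trans_le this.1, this.2⟩
  · rw [sub_zero, mul_assoc]
    exact mul_le_mul_of_nonneg_left hsW (by linarith)

theorem weightedEnergy_le_of_le_ω_mul_exp (h : BorderlineCoeff T₀ μ₁ μ₂ K₀ ω ψ c) (hT₁ : T₀ ≤ 1)
    (hμ₁ : 0 < μ₁) (hK₀ : 0 ≤ K₀) (hlam : 0 < lam) {m x : ℝ}
    (hu : IsSolutionOn c lam (Icc m x) u) (hm : 1 / lam ≤ m) (hmx : m ≤ x) (hxT : x ≤ T₀)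
    (hKm : K₀ * log lam ≤ lam * m) (hx : lam * x ≤ ω x * exp (ψ x)) :
    weightedEnergy c u lam x ≤ exp (K₀ * log lam / μ₁) * weightedEnergy c u lam m := by
  have hm0 : 0 < m := (one_div_pos.2 hlam).trans_le hm
  have hx0 : 0 < x := hm0.trans_le hmx
  have hxI : x ∈ Ioc 0 T₀ := ⟨hx0, hxT⟩
  have hωx := h.ω_pos x hxI
  have hIcc : Icc m x ⊆ Ioc 0 T₀ := fun s hs => ⟨hm0.trans_le hs.1, hs.2.trans hxT⟩
  set D := 1 + log (lam * x / ω x)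
  have hxm : x / m ≤ lam * x / ω x := by
    rw [div_le_div_iff₀ hm0 hωx]
    nlinarith [h.ω_le_log hT₁ hK₀ hlam (hm.trans hmx) hxT]
  have hlogD : log (x / m) ≤ D := by
    linarith [log_le_log (div_pos hx0 hm0) hxm]
  have hD : 1 ≤ D := by
    linarith [log_nonneg ((one_le_div hm0).2 hmx), log_le_log (div_pos hx0 hm0) hxm]
  have hDψ : D ≤ 1 + ψ x := by
    have := (log_le_iff_le_exp (div_pos (mul_pos hlam hx0) hωx)).2
      ((div_le_iff₀ hωx).2 (hx.trans_eq (mul_comm _ _)))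
    linarith
  have hc' : ∀ s ∈ Ioo m x, |deriv c s| ≤ K₀ * log lam / D / s := fun s hs => by
    have hsI := hIcc (Ioo_subset_Icc_self hs)
    refine (h.abs_deriv_le s hsI).trans (div_le_div_of_nonneg_right ?_ hsI.1.le)
    rw [le_div_iff₀ (by linarith)]
    calc ω s * D ≤ ω s * (1 + ψ s) := by
          gcongr
          · exact (h.ω_pos s hsI).le
          · exact hDψ.trans (by linarith [h.antitoneOn_ψ hsI hxI hs.2.le])
      _ ≤ K₀ * log lam := h.ω_mul_one_add_ψ_le_log hT₁ hK₀ hlam (hm.trans hs.1.le) hsI.2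
  refine (weightedEnergy_le_exp_mul hu hm0 hmx hμ₁ (fun s hs => h.differentiableAt s (hIcc hs))
    (fun s hs => (h.bounds s (hIcc hs)).1) hc').trans (mul_le_mul_of_nonneg_right ?_
      (weightedEnergy_nonneg (hμ₁.le.trans (h.bounds m (hIcc (left_mem_Icc.2 hmx))).1)))
  refine exp_le_exp.2 ?_
  have hK : 0 ≤ K₀ * log lam := by
    have := h.ω_le_log hT₁ hK₀ hlam (hm.trans hmx) hxT; linarith
  calc K₀ * log lam / D / μ₁ * log (x / m) ≤ K₀ * log lam / D / μ₁ * D := by gcongr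
    _ = K₀ * log lam / μ₁ := by field_simp

theorem weightedEnergy_le_before_crossing (h : BorderlineCoeff T₀ μ₁ μ₂ K₀ ω ψ c) (hT₁ : T₀ ≤ 1)
    (hμ₁ : 0 < μ₁) (hK₀ : 0 ≤ K₀) (hlam : 0 < lam) {m b : ℝ} (hu : IsSolutionOn c lam (Icc m b) u)
    (hm : 1 / lam ≤ m) (hmb : m < b) (hbT : b ≤ T₀) (hKm : K₀ * log lam ≤ lam * m)
    (hbelow : ∀ s ∈ Ioo 0 b, lam * s ≤ ω s * exp (ψ s)) {x : ℝ} (hx : x ∈ Icc m b) :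
    weightedEnergy c u lam x ≤ exp (K₀ * log lam / μ₁) * weightedEnergy c u lam m := by
  have hm0 : 0 < m := (one_div_pos.2 hlam).trans_le hm
  have hlt : ∀ y ∈ Ico m b, weightedEnergy c u lam y ≤
      exp (K₀ * log lam / μ₁) * weightedEnergy c u lam m := fun y hy =>
    h.weightedEnergy_le_of_le_ω_mul_exp hT₁ hμ₁ hK₀ hlam (hu.mono (Icc_subset_Icc_right hy.2.le))
      hm hy.1 (hy.2.le.trans hbT) hKm (hbelow y ⟨hm0.trans_le hy.1, hy.2⟩)
  rcases hx.2.lt_or_eq with hxb | rfl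
  · exact hlt x ⟨hx.1, hxb⟩
  have hG := hasDerivAt_weightedEnergy (hu.mono (singleton_subset_iff.2 hx))
    (h.differentiableAt x ⟨hm0.trans hmb, hbT⟩)
  refine ContinuousWithinAt.closure_le (s := Ioo m x) ?_ hG.continuousAt.continuousWithinAt
    continuousWithinAt_const fun y hy => hlt y ⟨hy.1.le, hy.2⟩
  rw [closure_Ioo hmb.ne]
  exact right_mem_Icc.2 hmb.le

theorem abs_deriv_le_after_crossing (h : BorderlineCoeff T₀ μ₁ μ₂ K₀ ω ψ c) (hlam : 0 ≤ lam)
    {b : ℝ} (hb : 0 < b) (hbT : b < T₀) (habove : ∀ s ∈ Ioc b T₀, ω s * exp (ψ s) ≤ lam * b) :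
    ∀ s ∈ Icc b T₀, |deriv c s| ≤ lam := by
  have hIoc : ∀ s ∈ Ioc b T₀, |deriv c s| ≤ lam := fun s hs => by
    have hsI : s ∈ Ioc 0 T₀ := ⟨hb.trans hs.1, hs.2⟩
    calc |deriv c s| ≤ ω s / s := h.abs_deriv_le s hsI
      _ ≤ lam * b / s := div_le_div_of_nonneg_right
          ((h.ω_le_ω_mul_exp_ψ hsI).trans (habove s hs)) hsI.1.le
      _ ≤ lam := by rw [div_le_iff₀ hsI.1]; nlinarith [hs.1]
  intro s hs
  rcases hs.1.eq_or_lt with rfl | hlt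
  · refine ContinuousWithinAt.closure_le (s := Ioo b T₀) (f := fun s => |deriv c s|) ?_
      (h.differentiableAt_deriv b ⟨hb, hbT.le⟩).continuousAt.abs.continuousWithinAt
      continuousWithinAt_const fun y hy => hIoc y ⟨hy.1, hy.2.le⟩
    rw [closure_Ioo hbT.ne]
    exact left_mem_Icc.2 hbT.le
  · exact hIoc s ⟨hlt, hs.2⟩

theorem ω_le_after_crossing (h : BorderlineCoeff T₀ μ₁ μ₂ K₀ ω ψ c) (hT₁ : T₀ ≤ 1)
    (hK₀ : 0 ≤ K₀) (hlam : 1 ≤ lam) {b : ℝ} (hb : 0 < b)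
    (habove : ∀ s ∈ Ioc b T₀, ω s * exp (ψ s) ≤ lam * b) :
    ∀ s ∈ Ioc b T₀, ω s ≤ 1 + K₀ * log lam := fun s hs => by
  have hlam0 : 0 < lam := one_pos.trans_le hlam
  rcases le_or_gt (1 / lam) s with hls | hsl
  · linarith [h.ω_le_log hT₁ hK₀ hlam0 hls hs.2]
  · have : lam * s < 1 := by rwa [lt_div_iff₀ hlam0, mul_comm] at hsl
    nlinarith [h.ω_le_ω_mul_exp_ψ ⟨hb.trans hs.1, hs.2⟩, habove s hs, hs.1,
      mul_nonneg hK₀ (log_nonneg hlam)]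

theorem correctedEnergy_le_after_crossing (h : BorderlineCoeff T₀ μ₁ μ₂ K₀ ω ψ c)
    (hμ₁ : 0 < μ₁) (hlam : 0 < lam) {b t W : ℝ} (hu : IsSolutionOn c lam (Icc b t) u)
    (hb : 0 < b) (hbt : b ≤ t) (htT : t ≤ T₀)
    (habove : ∀ s ∈ Ioc b T₀, ω s * exp (ψ s) ≤ lam * b) (hW : ∀ s ∈ Ioc b T₀, ω s ≤ W)
    (hW0 : 0 ≤ W) :
    correctedEnergy c u lam t ≤
      exp ((1 / (4 * μ₁) + 5 / (16 * μ₁ ^ 2)) / √μ₁ * W) * correctedEnergy c u lam b := by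
  have hIcc : Icc b t ⊆ Ioc 0 T₀ := fun s hs => ⟨hb.trans_le hs.1, hs.2.trans htT⟩
  have hω : ∀ s ∈ Ioo b t, ω s ^ 2 * exp (ψ s) ≤ W * (lam * b) := fun s hs => by
    have hsI := hIcc (Ioo_subset_Icc_self hs)
    have hs' : s ∈ Ioc b T₀ := ⟨hs.1, hsI.2⟩
    calc ω s ^ 2 * exp (ψ s) = ω s * (ω s * exp (ψ s)) := by ring
      _ ≤ W * (lam * b) := mul_le_mul (hW s hs') (habove s hs')
          (by have := h.ω_pos s hsI; positivity) hW0
  have key := correctedEnergy_le_exp_mul (k := W * (lam * b)) hu hb hbt hlam hμ₁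
    (fun s hs => h.differentiableAt s (hIcc hs)) (fun s hs => h.differentiableAt_deriv s (hIcc hs))
    (fun s hs => (h.bounds s (hIcc hs)).1)
    (fun s hs => by
      have hsI := hIcc (Ioo_subset_Icc_self hs)
      calc deriv c s ^ 2 ≤ (ω s / s) ^ 2 := by
            rw [← sq_abs]; exact pow_le_pow_left₀ (abs_nonneg _) (h.abs_deriv_le s hsI) 2
        _ = ω s ^ 2 / s ^ 2 := div_pow _ _ _
        _ ≤ ω s ^ 2 * exp (ψ s) / s ^ 2 := by
            gcongr
            exact le_mul_of_one_le_right (sq_nonneg _) (one_le_exp (h.ψ_pos s hsI).le)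
        _ ≤ W * (lam * b) / s ^ 2 := div_le_div_of_nonneg_right (hω s hs) (sq_nonneg s))
    (fun s hs => by
      have hsI := hIcc (Ioo_subset_Icc_self hs)
      calc |deriv (deriv c) s| ≤ ω s ^ 2 / s ^ 2 * exp (ψ s) := h.abs_deriv_deriv_le s hsI
        _ = ω s ^ 2 * exp (ψ s) / s ^ 2 := by ring
        _ ≤ W * (lam * b) / s ^ 2 := div_le_div_of_nonneg_right (hω s hs) (sq_nonneg s))
  refine key.trans (mul_le_mul_of_nonneg_right (exp_le_exp.2 ?_) correctedEnergy_nonneg)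
  have : W * (lam * b) / lam * (1 / b - 1 / t) = W * (1 - b / t) := by field_simp
  rw [mul_div_assoc, mul_assoc, this]
  have : 0 ≤ b / t := div_nonneg hb.le (hb.trans_le hbt).le
  gcongr
  nlinarith

theorem energy_le_before_crossing (h : BorderlineCoeff T₀ μ₁ μ₂ K₀ ω ψ c) (hT₁ : T₀ ≤ 1)
    (hμ₁ : 0 < μ₁) (hK₀ : 0 ≤ K₀) (hlam : 1 ≤ lam) (hu : IsSolutionOn c lam (Icc 0 T₀) u)
    {b : ℝ} (hb : b ∈ Ioc 0 T₀) (hbelow : ∀ s ∈ Ioo 0 b, lam * s ≤ ω s * exp (ψ s)) :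
    ∀ t ∈ Icc 0 b, energy u lam t ≤ (1 + μ₁⁻¹) * (1 + μ₂) *
      exp ((1 + μ₂ + μ₁⁻¹) * (1 + K₀ * log lam)) * energy u lam 0 := by
  intro t ht
  have hlam0 : 0 < lam := one_pos.trans_le hlam
  have hE0 : 0 ≤ energy u lam 0 := energy_nonneg
  have hμ₂ : 0 ≤ μ₂ := hμ₁.le.trans ((h.bounds b hb).1.trans (h.bounds b hb).2)
  have hL : 0 ≤ K₀ * log lam := mul_nonneg hK₀ (log_nonneg hlam)
  set W := 1 + K₀ * log lam
  set m := min b (W / lam)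
  have hmT : m ≤ T₀ := (min_le_left _ _).trans hb.2
  have hlamm : lam * m ≤ W := by
    calc lam * m ≤ lam * (W / lam) := by gcongr; exact min_le_right _ _
      _ = W := by field_simp
  have hA : ∀ s ∈ Icc 0 m, energy u lam s ≤ exp ((1 + μ₂) * W) * energy u lam 0 :=
    fun s hs => h.energy_le_of_mul_le hμ₁ hμ₂ hlam0 hu ⟨hs.1, hs.2.trans hmT⟩
      ((mul_le_mul_of_nonneg_left hs.2 hlam0.le).trans hlamm)
  have hCw : 1 ≤ (1 + μ₁⁻¹) * (1 + μ₂) :=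
    one_le_mul_of_one_le_of_one_le (by simp [hμ₁.le]) (by linarith)
  rcases le_or_gt t m with htm | hmt
  · calc energy u lam t ≤ exp ((1 + μ₂) * W) * energy u lam 0 := hA t ⟨ht.1, htm⟩
      _ ≤ exp ((1 + μ₂ + μ₁⁻¹) * W) * energy u lam 0 :=
        mul_le_mul_of_nonneg_right (exp_le_exp.2 (mul_le_mul_of_nonneg_right
          (le_add_of_nonneg_right (inv_pos.2 hμ₁).le) (by linarith))) hE0
      _ ≤ _ := by rw [mul_assoc _ (exp _)]; exact le_mul_of_one_le_left (by positivity) hCw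
  have hmb : m < b := hmt.trans_le ht.2
  have hmW : m = W / lam := min_eq_right (not_le.1 fun hbW => hmb.ne (min_eq_left hbW)).le
  have hm : 1 / lam ≤ m := by rw [hmW]; gcongr; linarith
  have hKm : K₀ * log lam ≤ lam * m := by rw [hmW, mul_div_cancel₀ _ hlam0.ne']; linarith
  have hm0 : 0 < m := (one_div_pos.2 hlam0).trans_le hm
  have htI : t ∈ Ioc 0 T₀ := ⟨hm0.trans hmt, ht.2.trans hb.2⟩
  have hmI : m ∈ Ioc 0 T₀ := ⟨hm0, hmT⟩
  have hG := h.weightedEnergy_le_before_crossing hT₁ hμ₁ hK₀ hlam0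
    (hu.mono (Icc_subset_Icc hm0.le hb.2)) hm hmb hb.2 hKm hbelow ⟨hmt.le, ht.2⟩
  calc energy u lam t ≤ (1 + μ₁⁻¹) * weightedEnergy c u lam t :=
        energy_le_weightedEnergy hμ₁ (h.bounds t htI).1
    _ ≤ (1 + μ₁⁻¹) * (exp (μ₁⁻¹ * W) * ((1 + μ₂) * (exp ((1 + μ₂) * W) * energy u lam 0))) := by
        gcongr
        refine hG.trans (mul_le_mul (exp_le_exp.2 ?_) ((weightedEnergy_le_energy
          (hμ₁.le.trans (h.bounds m hmI).1) (h.bounds m hmI).2).trans ?_)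
          (weightedEnergy_nonneg (hμ₁.le.trans (h.bounds m hmI).1)) (exp_pos _).le)
        · rw [div_eq_inv_mul]; gcongr; linarith
        · gcongr; exact hA m ⟨hm0.le, le_rfl⟩
    _ = _ := by rw [show (1 + μ₂ + μ₁⁻¹) * W = μ₁⁻¹ * W + (1 + μ₂) * W by ring, exp_add]; ring

theorem energy_le (h : BorderlineCoeff T₀ μ₁ μ₂ K₀ ω ψ c) (hT : 0 < T₀) (hT₁ : T₀ ≤ 1)
    (hμ₁ : 0 < μ₁) (hμ : μ₁ ≤ μ₂) (hK₀ : 0 ≤ K₀) (hlam : 1 ≤ lam)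
    (hlamT : ω T₀ * exp (ψ T₀) < lam * T₀) (hu : IsSolutionOn c lam (Icc 0 T₀) u) {t : ℝ}
    (ht : t ∈ Icc 0 T₀) :
    energy u lam t ≤ (2 * √μ₂ + (2 + 2 * (4 * μ₁)⁻¹ ^ 2) / √μ₁) ^ 2 * ((1 + μ₁⁻¹) * (1 + μ₂)) *
      exp ((1 + μ₂ + μ₁⁻¹ + (1 / (4 * μ₁) + 5 / (16 * μ₁ ^ 2)) / √μ₁) * (1 + K₀ * log lam)) *
        energy u lam 0 := by
  have hlam0 : 0 < lam := one_pos.trans_le hlam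
  have hE0 : 0 ≤ energy u lam 0 := energy_nonneg
  have hTI : T₀ ∈ Ioc 0 T₀ := ⟨hT, le_rfl⟩
  obtain ⟨b, hb, hbelow, habove⟩ := exists_crossing_of_antitoneOn h.antitoneOn_ω_mul_exp_ψ hlam0
    (mul_pos (h.ω_pos T₀ hTI) (exp_pos _)) hlamT
  have hB := h.energy_le_before_crossing hT₁ hμ₁ hK₀ hlam hu hb hbelow
  have hCq := one_le_two_mul_sqrt_add hμ₁ hμ
  have hCw : 1 ≤ (1 + μ₁⁻¹) * (1 + μ₂) :=
    one_le_mul_of_one_le_of_one_le (by simp [hμ₁.le]) (by linarith)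
  set Cq := 2 * √μ₂ + (2 + 2 * (4 * μ₁)⁻¹ ^ 2) / √μ₁
  set W := 1 + K₀ * log lam
  have hW : 1 ≤ W := le_add_of_nonneg_right (mul_nonneg hK₀ (log_nonneg hlam))
  rcases le_or_gt t b with htb | hbt
  · refine (hB t ⟨ht.1, htb⟩).trans (mul_le_mul_of_nonneg_right (mul_le_mul
      (le_mul_of_one_le_left (zero_le_one.trans hCw) (one_le_pow₀ hCq))
      (exp_le_exp.2 (mul_le_mul_of_nonneg_right (le_add_of_nonneg_right (by positivity))
        (by linarith))) (exp_pos _).le (by positivity)) hE0)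
  have hbT : b < T₀ := hbt.trans_le ht.2
  have hd := h.abs_deriv_le_after_crossing hlam0.le hb.1 hbT habove
  have hωW := h.ω_le_after_crossing hT₁ hK₀ hlam hb.1 habove
  have hbI : b ∈ Icc b T₀ := ⟨le_rfl, hbT.le⟩
  have htI : t ∈ Icc b T₀ := ⟨hbt.le, ht.2⟩
  calc energy u lam t ≤ Cq * correctedEnergy c u lam t :=
        energy_le_correctedEnergy hμ₁ (h.bounds t ⟨hb.1.trans hbt, ht.2⟩) (hd t htI)
    _ ≤ Cq * (exp ((1 / (4 * μ₁) + 5 / (16 * μ₁ ^ 2)) / √μ₁ * W) * (Cq *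
          ((1 + μ₁⁻¹) * (1 + μ₂) * exp ((1 + μ₂ + μ₁⁻¹) * W) * energy u lam 0))) := by
        gcongr
        refine (h.correctedEnergy_le_after_crossing hμ₁ hlam0 (hu.mono (Icc_subset_Icc hb.1.le
          ht.2)) hb.1 hbt.le ht.2 habove hωW (by linarith)).trans ?_
        gcongr
        exact (correctedEnergy_le_energy hμ₁ (h.bounds b hb) (hd b hbI)).trans
          (by gcongr; exact hB b ⟨hb.1.le, le_rfl⟩)
    _ = _ := by
        rw [show (1 + μ₂ + μ₁⁻¹ + (1 / (4 * μ₁) + 5 / (16 * μ₁ ^ 2)) / √μ₁) * W =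
          (1 / (4 * μ₁) + 5 / (16 * μ₁ ^ 2)) / √μ₁ * W + (1 + μ₂ + μ₁⁻¹) * W by ring, exp_add]
        ring

end BorderlineCoeff

theorem stmt8_general (T₀ μ₁ μ₂ K₀ : ℝ) (hT : 0 < T₀) (hT1 : T₀ < 1)
    (hμ₁ : 0 < μ₁) (hμ : μ₁ < μ₂) (hK₀ : 0 < K₀) (ω ψ c : ℝ → ℝ)
    (hω : AntitoneOn ω (Set.Ioc 0 T₀)) (hψ : AntitoneOn ψ (Set.Ioc 0 T₀))
    (hωpos : ∀ t ∈ Set.Ioc 0 T₀, 0 < ω t) (hψpos : ∀ t ∈ Set.Ioc 0 T₀, 0 < ψ t)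
    (hbal : ∀ t ∈ Set.Ioc 0 T₀, ω t * (1 + ψ t) ≤ K₀ * |Real.log t|)
    (hc1 : ∀ t ∈ Set.Ioc 0 T₀, DifferentiableAt ℝ c t)
    (hc2 : ∀ t ∈ Set.Ioc 0 T₀, DifferentiableAt ℝ (deriv c) t)
    (hcb : ∀ t ∈ Set.Ioc 0 T₀, μ₁ ≤ c t ∧ c t ≤ μ₂)
    (hc' : ∀ t ∈ Set.Ioc 0 T₀, |deriv c t| ≤ ω t / t)
    (hc'' : ∀ t ∈ Set.Ioc 0 T₀,
      |deriv (deriv c) t| ≤ (ω t) ^ 2 / t ^ 2 * Real.exp (ψ t)) :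
    ∃ lam₀ M δ : ℝ, 0 < lam₀ ∧ 0 < M ∧ 0 < δ ∧
      ∀ lam : ℝ, lam₀ ≤ lam → ∀ u : ℝ → ℝ,
        (∀ t ∈ Set.Icc 0 T₀, DifferentiableAt ℝ u t) →
        (∀ t ∈ Set.Icc 0 T₀, DifferentiableAt ℝ (deriv u) t) →
        (∀ t ∈ Set.Icc 0 T₀, deriv (deriv u) t + lam ^ 2 * c t * u t = 0) →
        ∀ t ∈ Set.Icc 0 T₀,
          (deriv u t) ^ 2 + lam ^ 2 * (u t) ^ 2 ≤
            M * ((deriv u 0) ^ 2 + lam ^ 2 * (u 0) ^ 2) * Real.rpow lam δ := by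
  have hc : BorderlineCoeff T₀ μ₁ μ₂ K₀ ω ψ c :=
    ⟨hω, hψ, hωpos, hψpos, hbal, hc1, hc2, hcb, hc', hc''⟩
  have hωT := hωpos T₀ ⟨hT, le_rfl⟩
  set A := 1 + μ₂ + μ₁⁻¹ + (1 / (4 * μ₁) + 5 / (16 * μ₁ ^ 2)) / √μ₁
  have hA : 0 < A := by have := hμ₁.trans hμ; positivity
  refine ⟨(ω T₀ * exp (ψ T₀) + 1) / T₀,
    (2 * √μ₂ + (2 + 2 * (4 * μ₁)⁻¹ ^ 2) / √μ₁) ^ 2 * ((1 + μ₁⁻¹) * (1 + μ₂)) * exp A, K₀ * A,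
    by positivity, by have := hμ₁.trans hμ; positivity, by positivity, ?_⟩
  intro lam hlam u hu₁ hu₂ hode t ht
  have hlamT : ω T₀ * exp (ψ T₀) + 1 ≤ lam * T₀ := (div_le_iff₀ hT).1 hlam
  have hlam1 : 1 ≤ lam := by nlinarith [mul_pos hωT (exp_pos (ψ T₀))]
  calc _ = energy u lam t := rfl
    _ ≤ (2 * √μ₂ + (2 + 2 * (4 * μ₁)⁻¹ ^ 2) / √μ₁) ^ 2 * ((1 + μ₁⁻¹) * (1 + μ₂)) *
          exp (A * (1 + K₀ * log lam)) * energy u lam 0 :=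
        hc.energy_le hT hT1.le hμ₁ hμ.le hK₀.le hlam1 (by linarith) ⟨hu₁, hu₂, hode⟩ ht
    _ = _ := by
      change _ = _ * lam ^ (K₀ * A)
      rw [rpow_def_of_pos (by linarith),
        show A * (1 + K₀ * log lam) = A + log lam * (K₀ * A) by ring, exp_add, energy]
      ring

theorem stmt8 (T₀ μ₁ μ₂ K₀ : ℝ) (hT : 0 < T₀) (hT1 : T₀ < 1)
    (hμ₁ : 0 < μ₁) (hμ : μ₁ < μ₂) (hK₀ : 0 < K₀) (ω ψ c : ℝ → ℝ)
    (hω : AntitoneOn ω (Set.Ioc 0 T₀)) (hψ : AntitoneOn ψ (Set.Ioc 0 T₀))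
    (hωpos : ∀ t ∈ Set.Ioc 0 T₀, 0 < ω t) (hψpos : ∀ t ∈ Set.Ioc 0 T₀, 0 < ψ t)
    (hbal : ∀ t ∈ Set.Ioc 0 T₀, ω t * (1 + ψ t) ≤ K₀ * |Real.log t|)
    (hccont : ContinuousOn c (Set.Icc 0 T₀))
    (hc1 : ∀ t ∈ Set.Ioc 0 T₀, DifferentiableAt ℝ c t)
    (hc2 : ∀ t ∈ Set.Ioc 0 T₀, DifferentiableAt ℝ (deriv c) t)
    (hcb : ∀ t ∈ Set.Ioc 0 T₀, μ₁ ≤ c t ∧ c t ≤ μ₂)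
    (hc' : ∀ t ∈ Set.Ioc 0 T₀, |deriv c t| ≤ ω t / t)
    (hc'' : ∀ t ∈ Set.Ioc 0 T₀,
      |deriv (deriv c) t| ≤ (ω t) ^ 2 / t ^ 2 * Real.exp (ψ t)) :
    ∃ lam₀ M δ : ℝ, 0 < lam₀ ∧ 0 < M ∧ 0 < δ ∧
      ∀ lam : ℝ, lam₀ ≤ lam → ∀ u : ℝ → ℝ,
        (∀ t ∈ Set.Icc 0 T₀, DifferentiableAt ℝ u t) →
        (∀ t ∈ Set.Icc 0 T₀, DifferentiableAt ℝ (deriv u) t) →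
        (∀ t ∈ Set.Icc 0 T₀, deriv (deriv u) t + lam ^ 2 * c t * u t = 0) →
        ∀ t ∈ Set.Icc 0 T₀,
          (deriv u t) ^ 2 + lam ^ 2 * (u t) ^ 2 ≤
            M * ((deriv u 0) ^ 2 + lam ^ 2 * (u 0) ^ 2) * Real.rpow lam δ :=
  stmt8_general T₀ μ₁ μ₂ K₀ hT hT1 hμ₁ hμ hK₀ ω ψ c hω hψ hωpos hψpos hbal hc1 hc2 hcb hc' hc''
end

section
/- Let ω, ψ : (0,T₀] → (0,∞) be nonincreasing with ω(t)(1+ψ(t)) ≤ K₀|log t|, and suppose |c'(t)| ≤ ω(t)/t. Set b_λ = (log λ/λ)·exp(ψ(1/λ)) and assume b_λ ≥ 1/λ. Then |c'(t)| ≤ K₀λ for all t ∈ [b_λ, T₀]. -/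
open Set

theorem stmt9 (T₀ K₀ lam bl : ℝ) (hT : 0 < T₀) (hT1 : T₀ < 1) (hK₀ : 0 < K₀)
    (hlam : Real.exp 1 < lam) (ω ψ c : ℝ → ℝ)
    (hω : AntitoneOn ω (Set.Ioc 0 T₀)) (hψ : AntitoneOn ψ (Set.Ioc 0 T₀))
    (hωpos : ∀ t ∈ Set.Ioc 0 T₀, 0 < ω t) (hψpos : ∀ t ∈ Set.Ioc 0 T₀, 0 < ψ t)
    (hbal : ∀ t ∈ Set.Ioc 0 T₀, ω t * (1 + ψ t) ≤ K₀ * |Real.log t|)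
    (hc : ∀ t ∈ Set.Ioc 0 T₀, DifferentiableAt ℝ c t)
    (hc' : ∀ t ∈ Set.Ioc 0 T₀, |deriv c t| ≤ ω t / t)
    (hbl : bl = Real.log lam / lam * Real.exp (ψ (1 / lam)))
    (hbl1 : 1 / lam ≤ bl) (hbl2 : bl ≤ T₀) :
    ∀ t ∈ Set.Icc bl T₀, |deriv c t| ≤ K₀ * lam := by
  intro t ht
  have hlam1 : (1 : ℝ) < lam := lt_trans (by
    have := Real.exp_one_gt_d9; linarith) hlam
  have hlampos : (0 : ℝ) < lam := by linarith
  have hinvpos : (0 : ℝ) < 1 / lam := by positivity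
  have hinvmem : (1 / lam) ∈ Set.Ioc 0 T₀ := ⟨hinvpos, le_trans hbl1 hbl2⟩
  have hblpos : 0 < bl := lt_of_lt_of_le hinvpos hbl1
  have htpos : 0 < t := lt_of_lt_of_le hblpos ht.1
  have htmem : t ∈ Set.Ioc 0 T₀ := ⟨htpos, ht.2⟩
  have hlog : 1 ≤ Real.log lam := by
    have := Real.exp_le_exp.mpr (le_refl (1:ℝ))
    calc (1:ℝ) = Real.log (Real.exp 1) := (Real.log_exp 1).symm
    _ ≤ Real.log lam := Real.log_le_log (Real.exp_pos 1) (le_of_lt hlam)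
  have hlogpos : 0 < Real.log lam := by linarith
  -- |log (1/λ)| = log λ
  have habs : |Real.log (1 / lam)| = Real.log lam := by
    rw [Real.log_div one_ne_zero (ne_of_gt hlampos), Real.log_one]
    rw [abs_of_nonpos (by linarith)]; ring
  -- ω(1/λ) ≤ K₀ log λ
  have hψp := hψpos _ hinvmem
  have hωp := hωpos _ hinvmem
  have h1 : ω (1 / lam) ≤ K₀ * Real.log lam := by
    have := hbal _ hinvmem
    rw [habs] at this
    nlinarith
  -- ω(1/λ) ≤ K₀ λ bl
  have h2 : ω (1 / lam) ≤ K₀ * lam * bl := by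
    have hexp : (1:ℝ) ≤ Real.exp (ψ (1 / lam)) := by
      rw [Real.one_le_exp_iff]; linarith
    have : K₀ * lam * bl = K₀ * Real.log lam * Real.exp (ψ (1 / lam)) := by
      rw [hbl]; field_simp
    rw [this]
    calc ω (1 / lam) ≤ K₀ * Real.log lam := h1
    _ = K₀ * Real.log lam * 1 := by ring
    _ ≤ K₀ * Real.log lam * Real.exp (ψ (1 / lam)) := by
        apply mul_le_mul_of_nonneg_left hexp; positivity
  have hωt : ω t ≤ ω (1 / lam) := hω hinvmem htmem (le_trans hbl1 ht.1)
  calc |deriv c t| ≤ ω t / t := hc' _ htmem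
    _ ≤ ω (1 / lam) / bl := by
        exact div_le_div₀ (le_of_lt hωp) hωt hblpos ht.1
    _ ≤ K₀ * lam := by
        rw [div_le_iff₀ hblpos]; exact h2
end

section
/- For real parameters γ > 0, λ > 0 and a C¹ function ε : [a,b] → ℝ, the function u(t) = (1/(γλ))·sin(γλt)·exp( (1/(8γ²))·∫ₐᵗ ε(s)sin²(γλs) ds ) solves the equation u''(t) + λ²c(t)u(t) = 0 on [a,b], where c(t) = γ² − (ε(t)/(4γλ))sin(2γλt) − (ε'(t)/(8γ²λ²))sin²(γλt) − (ε(t)²/(64γ⁴λ²))sin⁴(γλt). -/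
open Set Real

/-!
Write `u = w · exp φ` with `w t = sin (k t) / k`, `k = γ λ`, and `φ` the weighted integral in the
exponent, so that `w'' = -k² w` and `φ' = ε sin² (k t) / (8 γ²)`. Then
`u'' = (w'' + 2 w' φ' + w (φ'' + φ'²)) exp φ`, and the three correction terms of `c` are exactly
what cancels `2 w' φ' + w φ''` (the `ε` and `ε'` terms) and `w φ'²` (the `ε²` term).
-/

theorem HasDerivWithinAt.mul_exp {w φ : ℝ → ℝ} {w' φ' : ℝ} {s : Set ℝ} {t : ℝ}
    (hw : HasDerivWithinAt w w' s t) (hφ : HasDerivWithinAt φ φ' s t) :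
    HasDerivWithinAt (fun x => w x * Real.exp (φ x)) ((w' + w t * φ') * Real.exp (φ t)) s t :=
  (hw.mul hφ.exp).congr_deriv (by ring)

theorem ContinuousOn.hasDerivWithinAt_integral_Icc {f : ℝ → ℝ} {a b x₀ t : ℝ}
    (hf : ContinuousOn f (Icc a b)) (hx₀ : x₀ ∈ Icc a b) (ht : t ∈ Icc a b) :
    HasDerivWithinAt (fun x => ∫ s in x₀..x, f s) (f t) (Icc a b) t := by
  have : Fact (t ∈ Icc a b) := ⟨ht⟩
  exact intervalIntegral.integral_hasDerivWithinAt_right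
    ((hf.mono (uIcc_subset_Icc hx₀ ht)).intervalIntegrable)
    (hf.stronglyMeasurableAtFilter_nhdsWithin measurableSet_Icc t) (hf t ht)

theorem HasDerivWithinAt.mul_sin_mul_sq {ε : ℝ → ℝ} {ε' : ℝ} {s : Set ℝ} {t : ℝ} (k : ℝ)
    (hε : HasDerivWithinAt ε ε' s t) :
    HasDerivWithinAt (fun x => ε x * Real.sin (k * x) ^ 2)
      (ε' * Real.sin (k * t) ^ 2 + ε t * (2 * k * Real.sin (k * t) * Real.cos (k * t))) s t := by
  have hsin : HasDerivAt (fun x => Real.sin (k * x)) (Real.cos (k * t) * k) t := by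
    simpa using ((hasDerivAt_id t).const_mul k).sin
  exact (hε.mul (hsin.hasDerivWithinAt.pow 2)).congr_deriv (by simp only [Pi.pow_apply]; ring)

theorem stmt10_general (γ lam a b : ℝ) (hγ : 0 < γ) (hlam : 0 < lam)
    (ε ε' : ℝ → ℝ)
    (hε : ∀ t ∈ Set.Icc a b, HasDerivWithinAt ε (ε' t) (Set.Icc a b) t)
    (u c : ℝ → ℝ)
    (hu : ∀ t, u t = 1 / (γ * lam) * Real.sin (γ * lam * t) *
      Real.exp (1 / (8 * γ ^ 2) * ∫ s in a..t, ε s * (Real.sin (γ * lam * s)) ^ 2))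
    (hc : ∀ t, c t = γ ^ 2 - ε t / (4 * γ * lam) * Real.sin (2 * γ * lam * t) -
      ε' t / (8 * γ ^ 2 * lam ^ 2) * (Real.sin (γ * lam * t)) ^ 2 -
      (ε t) ^ 2 / (64 * γ ^ 4 * lam ^ 2) * (Real.sin (γ * lam * t)) ^ 4) :
    ∃ u' : ℝ → ℝ,
      (∀ t ∈ Set.Icc a b, HasDerivWithinAt u (u' t) (Set.Icc a b) t) ∧
      (∀ t ∈ Set.Icc a b,
        HasDerivWithinAt u' (-(lam ^ 2 * c t * u t)) (Set.Icc a b) t) := by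
  set k := γ * lam
  have hk : k ≠ 0 := by positivity
  have hεc : ContinuousOn ε (Icc a b) := fun t ht => (hε t ht).continuousWithinAt
  set φ := fun t => 1 / (8 * γ ^ 2) * ∫ s in a..t, ε s * sin (k * s) ^ 2
  set ψ := fun t => 1 / (8 * γ ^ 2) * (ε t * sin (k * t) ^ 2)
  have hφ : ∀ t ∈ Icc a b, HasDerivWithinAt φ (ψ t) (Icc a b) t := fun t ht =>
    ((hεc.mul (by fun_prop)).hasDerivWithinAt_integral_Icc ⟨le_rfl, ht.1.trans ht.2⟩ ht).const_mul _
  have hψ : ∀ t ∈ Icc a b, HasDerivWithinAt ψ (1 / (8 * γ ^ 2) *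
      (ε' t * sin (k * t) ^ 2 + ε t * (2 * k * sin (k * t) * cos (k * t)))) (Icc a b) t :=
    fun t ht => ((hε t ht).mul_sin_mul_sq k).const_mul _
  have hw (t : ℝ) : HasDerivAt (fun x => 1 / k * sin (k * x)) (cos (k * t)) t :=
    (((hasDerivAt_id t).const_mul k).sin.const_mul (1 / k)).congr_deriv (by field_simp; simp)
  have hw' (t : ℝ) : HasDerivAt (fun x => cos (k * x)) (-(k * sin (k * t))) t :=
    ((hasDerivAt_id t).const_mul k).cos.congr_deriv (by simp; ring)
  refine ⟨fun t => (cos (k * t) + 1 / k * sin (k * t) * ψ t) * exp (φ t), fun t ht => ?_,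
    fun t ht => ?_⟩
  · rw [funext hu]
    exact (hw t).hasDerivWithinAt.mul_exp (hφ t ht)
  · refine (((hw' t).hasDerivWithinAt.add ((hw t).hasDerivWithinAt.mul (hψ t ht))).mul_exp
      (hφ t ht)).congr_deriv ?_
    rw [hc, hu, show 2 * γ * lam * t = 2 * (k * t) by ring, sin_two_mul]
    simp only [k, φ, ψ, Pi.add_apply, Pi.mul_apply]
    field_simp
    ring

theorem stmt10 (γ lam a b : ℝ) (hγ : 0 < γ) (hlam : 0 < lam) (ha : 0 ≤ a)
    (hab : a < b) (ε ε' : ℝ → ℝ)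
    (hεc : ContinuousOn ε (Set.Icc a b))
    (hε : ∀ t ∈ Set.Icc a b, HasDerivWithinAt ε (ε' t) (Set.Icc a b) t)
    (hε'c : ContinuousOn ε' (Set.Icc a b))
    (u c : ℝ → ℝ)
    (hu : ∀ t, u t = 1 / (γ * lam) * Real.sin (γ * lam * t) *
      Real.exp (1 / (8 * γ ^ 2) * ∫ s in a..t, ε s * (Real.sin (γ * lam * s)) ^ 2))
    (hc : ∀ t, c t = γ ^ 2 - ε t / (4 * γ * lam) * Real.sin (2 * γ * lam * t) -
      ε' t / (8 * γ ^ 2 * lam ^ 2) * (Real.sin (γ * lam * t)) ^ 2 -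
      (ε t) ^ 2 / (64 * γ ^ 4 * lam ^ 2) * (Real.sin (γ * lam * t)) ^ 4) :
    ∃ u' : ℝ → ℝ,
      (∀ t ∈ Set.Icc a b, HasDerivWithinAt u (u' t) (Set.Icc a b) t) ∧
      (∀ t ∈ Set.Icc a b,
        HasDerivWithinAt u' (-(lam ^ 2 * c t * u t)) (Set.Icc a b) t) :=
  stmt10_general γ lam a b hγ hlam ε ε' hε u c hu hc
end

section
/- Let γ > 0, λ > 0, and 0 < a < b with γλa and γλb both integer multiples of 2π, and suppose moreover 2a < b/2. If 2γλs is an integer multiple of π at s = 2a and s = b/2, then ∫_{2a}^{b/2} cos(2γλs)/s ds = (1/(2γλ))·∫_{2a}^{b/2} sin(2γλs)/s² ds ≤ 1/(4γλa), and consequently ∫_{2a}^{b/2} sin²(γλs)/s ds ≥ (1/2)·( log(b/(4a)) − 1/(4γλa) ). -/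
/-!
Write `ω = 2γλ`. Since `sin² θ = (1 - cos 2θ) / 2`, the integral of `sin²(γλs)/s` is half
of `log (b / 4a)` minus half of `∫ cos(ωs)/s`. Integrating the latter by parts against `1/s`,
the boundary terms `sin(ωs)/(ωs)` vanish because `ωs ∈ πℕ` at both endpoints, and what is
left, `(1/ω) ∫ sin(ωs)/s²`, is at most `(1/ω) ∫ s⁻² ≤ 1/(2aω) = 1/(4γλa)`.
-/

open Set MeasureTheory Real
open scoped Interval

theorem integral_cos_mul_div_eq_of_sin_eq_zero {ω s t : ℝ} (hω : ω ≠ 0)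
    (h0 : (0 : ℝ) ∉ [[s, t]]) (hs : sin (ω * s) = 0) (ht : sin (ω * t) = 0) :
    ∫ x in s..t, cos (ω * x) / x = 1 / ω * ∫ x in s..t, sin (ω * x) / x ^ 2 := by
  have hne : ∀ x ∈ [[s, t]], x ≠ 0 := fun x hx h => h0 (h ▸ hx)
  have hu : ∀ x ∈ [[s, t]], HasDerivAt (fun y : ℝ => y⁻¹) (-(x ^ 2)⁻¹) x :=
    fun x hx => hasDerivAt_inv (hne x hx)
  have hv : ∀ x ∈ [[s, t]], HasDerivAt (fun y => sin (ω * y) / ω) (cos (ω * x)) x := by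
    intro x _
    simpa [hω] using (((hasDerivAt_id x).const_mul ω).sin).div_const ω
  have hu' : IntervalIntegrable (fun x : ℝ => -(x ^ 2)⁻¹) volume s t :=
    (ContinuousOn.intervalIntegrable
      ((continuousOn_id.pow 2).inv₀ fun x hx => pow_ne_zero 2 (hne x hx))).neg
  have hv' : IntervalIntegrable (fun x => cos (ω * x)) volume s t := by
    apply Continuous.intervalIntegrable; fun_prop
  have hparts := intervalIntegral.integral_mul_deriv_eq_deriv_mul hu hv hu' hv'
  simp only [hs, ht, zero_div, mul_zero, sub_zero, neg_mul, intervalIntegral.integral_neg,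
    zero_sub, neg_neg] at hparts
  calc ∫ x in s..t, cos (ω * x) / x
      = ∫ x in s..t, x⁻¹ * cos (ω * x) := by simp only [div_eq_inv_mul]
    _ = ∫ x in s..t, 1 / ω * (sin (ω * x) / x ^ 2) := by rw [hparts]; congr 1; ext x; ring
    _ = 1 / ω * ∫ x in s..t, sin (ω * x) / x ^ 2 := intervalIntegral.integral_const_mul _ _

theorem integral_sin_mul_div_sq_le {ω s t : ℝ} (hs : 0 < s) (hst : s ≤ t) :
    ∫ x in s..t, sin (ω * x) / x ^ 2 ≤ s⁻¹ := by
  have hpos : ∀ x ∈ [[s, t]], 0 < x := fun x hx => hs.trans_le (by simpa [hst] using hx.1)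
  have hsq : IntervalIntegrable (fun x : ℝ => (x ^ 2)⁻¹) volume s t :=
    ContinuousOn.intervalIntegrable
      ((continuousOn_id.pow 2).inv₀ fun x hx => (pow_pos (hpos x hx) 2).ne')
  have hsin : IntervalIntegrable (fun x => sin (ω * x) / x ^ 2) volume s t :=
    ContinuousOn.intervalIntegrable
      (ContinuousOn.div (by fun_prop) (by fun_prop) fun x hx => (pow_pos (hpos x hx) 2).ne')
  have hprim : ∀ x ∈ [[s, t]], HasDerivAt (fun y : ℝ => -y⁻¹) ((x ^ 2)⁻¹) x := by
    intro x hx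
    simpa using (hasDerivAt_inv (hpos x hx).ne').fun_neg
  calc ∫ x in s..t, sin (ω * x) / x ^ 2
      ≤ ∫ x in s..t, (x ^ 2)⁻¹ := by
        refine intervalIntegral.integral_mono_on hst hsin hsq fun x hx => ?_
        rw [← one_div]
        gcongr
        exact sin_le_one _
    _ = s⁻¹ - t⁻¹ := by
        rw [intervalIntegral.integral_eq_sub_of_hasDerivAt hprim hsq]; ring
    _ ≤ s⁻¹ := by
        have : 0 < t⁻¹ := inv_pos.2 (hs.trans_le hst)
        linarith

theorem integral_cos_mul_div_le_of_sin_eq_zero {ω s t : ℝ} (hω : 0 < ω) (hs : 0 < s)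
    (hst : s ≤ t) (hs0 : sin (ω * s) = 0) (ht0 : sin (ω * t) = 0) :
    ∫ x in s..t, cos (ω * x) / x ≤ 1 / (ω * s) := by
  rw [integral_cos_mul_div_eq_of_sin_eq_zero hω.ne' (notMem_uIcc_of_lt hs (hs.trans_le hst))
    hs0 ht0]
  calc 1 / ω * ∫ x in s..t, sin (ω * x) / x ^ 2
      ≤ 1 / ω * s⁻¹ := by gcongr; exact integral_sin_mul_div_sq_le hs hst
    _ = 1 / (ω * s) := by ring

theorem integral_sin_sq_mul_div_eq {ω s t : ℝ} (h0 : (0 : ℝ) ∉ [[s, t]]) :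
    ∫ x in s..t, sin (ω * x) ^ 2 / x =
      1 / 2 * (log (t / s) - ∫ x in s..t, cos (2 * ω * x) / x) := by
  have hne : ∀ x ∈ [[s, t]], x ≠ 0 := fun x hx h => h0 (h ▸ hx)
  have hinv : IntervalIntegrable (fun x : ℝ => 1 / x) volume s t :=
    ContinuousOn.intervalIntegrable (continuousOn_const.div continuousOn_id hne)
  have hcos : IntervalIntegrable (fun x => cos (2 * ω * x) / x) volume s t :=
    ContinuousOn.intervalIntegrable (ContinuousOn.div (by fun_prop) continuousOn_id hne)
  calc ∫ x in s..t, sin (ω * x) ^ 2 / x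
      = ∫ x in s..t, (1 / 2 * (1 / x) - 1 / 2 * (cos (2 * ω * x) / x)) := by
        refine intervalIntegral.integral_congr fun x _ => ?_
        simp only [sin_sq_eq_half_sub, ← mul_assoc]
        ring
    _ = 1 / 2 * (log (t / s) - ∫ x in s..t, cos (2 * ω * x) / x) := by
        rw [intervalIntegral.integral_sub (hinv.const_mul _) (hcos.const_mul _),
          intervalIntegral.integral_const_mul, intervalIntegral.integral_const_mul,
          integral_one_div h0]
        ring

theorem stmt11_general (γ lam a b : ℝ) (hγ : 0 < γ) (hlam : 0 < lam) (ha : 0 < a)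
    (hab : 2 * a < b / 2)
    (hk2a : ∃ p : ℕ, 2 * γ * lam * (2 * a) = Real.pi * p)
    (hk2b : ∃ q : ℕ, 2 * γ * lam * (b / 2) = Real.pi * q) :
    (∫ s in (2 * a)..(b / 2), Real.cos (2 * γ * lam * s) / s) =
        1 / (2 * γ * lam) * ∫ s in (2 * a)..(b / 2), Real.sin (2 * γ * lam * s) / s ^ 2 ∧
    (∫ s in (2 * a)..(b / 2), Real.cos (2 * γ * lam * s) / s) ≤ 1 / (4 * γ * lam * a) ∧
    (∫ s in (2 * a)..(b / 2), (Real.sin (γ * lam * s)) ^ 2 / s) ≥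
      1 / 2 * (Real.log (b / (4 * a)) - 1 / (4 * γ * lam * a)) := by
  obtain ⟨p, hp⟩ := hk2a
  obtain ⟨q, hq⟩ := hk2b
  have hsa : sin (2 * γ * lam * (2 * a)) = 0 := by rw [hp, mul_comm, sin_nat_mul_pi]
  have hsb : sin (2 * γ * lam * (b / 2)) = 0 := by rw [hq, mul_comm, sin_nat_mul_pi]
  have h2a : 0 < 2 * a := by positivity
  have h0 : (0 : ℝ) ∉ [[2 * a, b / 2]] := notMem_uIcc_of_lt h2a (h2a.trans hab)
  have hbound : ∫ s in (2 * a)..(b / 2), cos (2 * γ * lam * s) / s ≤ 1 / (4 * γ * lam * a) :=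
    (integral_cos_mul_div_le_of_sin_eq_zero (by positivity) h2a hab.le hsa hsb).trans_eq
      (by ring)
  refine ⟨integral_cos_mul_div_eq_of_sin_eq_zero (by positivity) h0 hsa hsb, hbound, ?_⟩
  have hsq := integral_sin_sq_mul_div_eq (ω := γ * lam) h0
  simp only [← mul_assoc] at hsq
  rw [hsq, show b / 2 / (2 * a) = b / (4 * a) by ring]
  linarith

theorem stmt11 (γ lam a b : ℝ) (hγ : 0 < γ) (hlam : 0 < lam) (ha : 0 < a)
    (hab : 2 * a < b / 2) (hbb : b / 2 < b)
    (hka : ∃ m : ℕ, γ * lam * a = 2 * Real.pi * m)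
    (hkb : ∃ n : ℕ, γ * lam * b = 2 * Real.pi * n)
    (hk2a : ∃ p : ℕ, 2 * γ * lam * (2 * a) = Real.pi * p)
    (hk2b : ∃ q : ℕ, 2 * γ * lam * (b / 2) = Real.pi * q) :
    (∫ s in (2 * a)..(b / 2), Real.cos (2 * γ * lam * s) / s) =
        1 / (2 * γ * lam) * ∫ s in (2 * a)..(b / 2), Real.sin (2 * γ * lam * s) / s ^ 2 ∧
    (∫ s in (2 * a)..(b / 2), Real.cos (2 * γ * lam * s) / s) ≤ 1 / (4 * γ * lam * a) ∧
    (∫ s in (2 * a)..(b / 2), (Real.sin (γ * lam * s)) ^ 2 / s) ≥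
      1 / 2 * (Real.log (b / (4 * a)) - 1 / (4 * γ * lam * a)) :=
  stmt11_general γ lam a b hγ hlam ha hab hk2a hk2b
end
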